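/- arXiv:1607.07105 — 12 statements merged into one kernel-verified Lean document; each statement's English description precedes it below -/
import Mathlib

section
/- For every integer n ≥ 1 and every value distribution represented by G as in the context, if the set {p(1−G(p)^n) : p ≥ 0} is bounded above, then R^x_n ≤ (2 − 1/n)·R^a_n; equivalently, for every q ∈ [0,1]^n with Σ_{i=1}^n q_i ≤ 1 one has Σ_{i=1}^n q_i·invG(1−q_i) ≤ (2 − 1/n)·sup_{p≥0} p(1−G(p)^n). -/
/-!
Fix a bidder `i` with ex-ante probability `q` and a price `p` with `G p ≤ 1 - q`. Posting `p`
to all `n` bidders sells with probability `1 - G p ^ n ≥ 1 - (1 - q) ^ n`, and the elementary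
inequality `n q ≤ (1 + (n - 1) q) (1 - (1 - q) ^ n)` turns this into
`q p ≤ R (1 + (n - 1) q) / n`, where `R` is the optimal anonymous revenue. Summing over bidders
and using `∑ q ≤ 1` gives `R (n + (n - 1)) / n = (2 - 1/n) R`.
-/

open Finset

lemma one_sub_pow_mul_one_add_mul_le_one {q : ℝ} (hq0 : 0 ≤ q) (hq1 : q ≤ 1) (m : ℕ) :
    (1 - q) ^ m * (1 + m * q) ≤ 1 :=
  calc (1 - q) ^ m * (1 + m * q)
      ≤ (1 - q) ^ m * (1 + q) ^ m :=
        mul_le_mul_of_nonneg_left (one_add_mul_le_pow (by linarith) m) (pow_nonneg (by linarith) m)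
    _ = (1 - q ^ 2) ^ m := by rw [← mul_pow]; ring
    _ ≤ 1 := pow_le_one₀ (by nlinarith) (by nlinarith)

lemma natCast_mul_le_one_add_mul_mul_one_sub_one_sub_pow {n : ℕ} (hn : 1 ≤ n) {q : ℝ}
    (hq0 : 0 ≤ q) (hq1 : q ≤ 1) :
    n * q ≤ (1 + (n - 1) * q) * (1 - (1 - q) ^ n) := by
  obtain ⟨m, rfl⟩ := Nat.exists_eq_add_of_le' hn
  have h := one_sub_pow_mul_one_add_mul_le_one hq0 hq1 m
  rw [pow_succ]
  push_cast
  nlinarith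

lemma Real.mul_sSup_le {a c : ℝ} {s : Set ℝ} (ha : 0 ≤ a) (hc : 0 ≤ c)
    (h : ∀ x ∈ s, a * x ≤ c) : a * sSup s ≤ c := by
  rw [← smul_eq_mul, ← Real.sSup_smul_of_nonneg ha]
  refine Real.sSup_le ?_ hc
  rintro _ ⟨x, hx, rfl⟩
  exact h x hx

lemma mul_sSup_le_of_revenue_le {G : ℝ → ℝ} (hG0 : ∀ p, 0 ≤ G p) {n : ℕ} (hn : 1 ≤ n)
    {R : ℝ} (hR : ∀ p, 0 ≤ p → p * (1 - G p ^ n) ≤ R) {q : ℝ} (hq0 : 0 ≤ q) (hq1 : q ≤ 1) :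
    q * sSup {p : ℝ | 0 ≤ p ∧ G p ≤ 1 - q} ≤ R * (1 + (n - 1) * q) / n := by
  have hn' : (1 : ℝ) ≤ n := by exact_mod_cast hn
  have hR0 : 0 ≤ R := by simpa using hR 0 le_rfl
  have hc : 0 ≤ 1 + ((n : ℝ) - 1) * q := by nlinarith
  refine Real.mul_sSup_le hq0 (by positivity) ?_
  rintro p ⟨hp0, hpG⟩
  have hsale : 1 - (1 - q) ^ n ≤ 1 - G p ^ n := by
    linarith [pow_le_pow_left₀ (hG0 p) hpG n]
  rw [le_div_iff₀ (by linarith)]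
  calc q * p * n = (n * q) * p := by ring
    _ ≤ (1 + (n - 1) * q) * (1 - (1 - q) ^ n) * p :=
      mul_le_mul_of_nonneg_right (natCast_mul_le_one_add_mul_mul_one_sub_one_sub_pow hn hq0 hq1) hp0
    _ ≤ (1 + (n - 1) * q) * (p * (1 - G p ^ n)) := by
      rw [mul_assoc, mul_comm _ p]
      exact mul_le_mul_of_nonneg_left (mul_le_mul_of_nonneg_left hsale hp0) hc
    _ ≤ (1 + (n - 1) * q) * R := mul_le_mul_of_nonneg_left (hR p hp0) hc
    _ = R * (1 + (n - 1) * q) := mul_comm _ _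

theorem stmt_0_general (n : ℕ) (hn : 1 ≤ n) (G : ℝ → ℝ)
    (hG0 : ∀ p : ℝ, 0 ≤ G p)
    (hbddrev : BddAbove {r : ℝ | ∃ p : ℝ, 0 ≤ p ∧ r = p * (1 - (G p) ^ n)})
    (q : Fin n → ℝ) (hq0 : ∀ i, 0 ≤ q i) (hq1 : ∀ i, q i ≤ 1)
    (hqsum : ∑ i, q i ≤ 1) :
    ∑ i, q i * sSup {p : ℝ | 0 ≤ p ∧ G p ≤ 1 - q i}
      ≤ (2 - 1 / (n : ℝ)) * sSup {r : ℝ | ∃ p : ℝ, 0 ≤ p ∧ r = p * (1 - (G p) ^ n)} := by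
  set R := sSup {r : ℝ | ∃ p : ℝ, 0 ≤ p ∧ r = p * (1 - (G p) ^ n)}
  have hR : ∀ p, 0 ≤ p → p * (1 - G p ^ n) ≤ R := fun p hp => le_csSup hbddrev ⟨p, hp, rfl⟩
  have hR0 : 0 ≤ R := by simpa using hR 0 le_rfl
  have hn' : (1 : ℝ) ≤ n := by exact_mod_cast hn
  calc ∑ i, q i * sSup {p : ℝ | 0 ≤ p ∧ G p ≤ 1 - q i}
      ≤ ∑ i, R * (1 + (n - 1) * q i) / n :=
        sum_le_sum fun i _ => mul_sSup_le_of_revenue_le hG0 hn hR (hq0 i) (hq1 i)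
    _ = R * (n + (n - 1) * ∑ i, q i) / n := by
        rw [← sum_div, ← mul_sum, sum_add_distrib, ← mul_sum]
        simp
    _ ≤ R * (n + (n - 1)) / n := by gcongr; exact mul_le_of_le_one_right (by linarith) hqsum
    _ = (2 - 1 / (n : ℝ)) * R := by field_simp; ring

/-- Theorem 3 (general distributions): the ex-ante relaxation revenue is at most
`(2 - 1/n)` times the optimal anonymous-price revenue.  The value distribution is
represented by `G` (the left-limit of the cdf), `invG t = sSup {p | 0 ≤ p ∧ G p ≤ t}`. -/
theorem stmt_0 (n : ℕ) (hn : 1 ≤ n) (G : ℝ → ℝ)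
    (hmono : Monotone G)
    (hleft : ∀ x : ℝ, Filter.Tendsto G (nhdsWithin x (Set.Iio x)) (nhds (G x)))
    (hG0 : ∀ p : ℝ, 0 ≤ G p) (hG1 : ∀ p : ℝ, G p ≤ 1)
    (hGneg : ∀ p : ℝ, p ≤ 0 → G p = 0)
    (hbddinv : ∀ t : ℝ, 0 ≤ t → t < 1 → BddAbove {p : ℝ | 0 ≤ p ∧ G p ≤ t})
    (hbddrev : BddAbove {r : ℝ | ∃ p : ℝ, 0 ≤ p ∧ r = p * (1 - (G p) ^ n)})
    (q : Fin n → ℝ) (hq0 : ∀ i, 0 ≤ q i) (hq1 : ∀ i, q i ≤ 1)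
    (hqsum : ∑ i, q i ≤ 1) :
    ∑ i, q i * sSup {p : ℝ | 0 ≤ p ∧ G p ≤ 1 - q i}
      ≤ (2 - 1 / (n : ℝ)) * sSup {r : ℝ | ∃ p : ℝ, 0 ≤ p ∧ r = p * (1 - (G p) ^ n)} :=
  stmt_0_general n hn G hG0 hbddrev q hq0 hq1 hqsum
end

section
/- For every integer n ≥ 1, every value distribution represented by G as in the context, and every vector p⃗ = (p_1,…,p_n) of nonnegative prices, there exists q ∈ [0,1]^n with Σ_{i=1}^n q_i ≤ 1 such that R^d_n(p⃗) ≤ Σ_{i=1}^n q_i·invG(1−q_i) (one may take q_i = (1−G(p_i))·Π_{j<i}G(p_j)); consequently R^d_n ≤ R^x_n. -/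
lemma telescope_aux (g : ℕ → ℝ) (m : ℕ) :
    ∑ i ∈ Finset.range m, (1 - g i) * ∏ j ∈ Finset.range i, g j
      = 1 - ∏ j ∈ Finset.range m, g j := by
  induction m with
  | zero => simp
  | succ m ih => rw [Finset.sum_range_succ, ih, Finset.prod_range_succ]; ring

/-- Lemma 1: the ex-ante relaxation relaxes discriminatory pricing.  For any vector of
nonnegative discriminatory prices there are feasible ex-ante sale probabilities `q`
(one may take `q i = (1 - G (p i)) * ∏_{j<i} G (p j)`) whose ex-ante revenue dominates
the discriminatory revenue. -/
theorem stmt_1 (n : ℕ) (hn : 1 ≤ n) (G : ℝ → ℝ)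
    (hmono : Monotone G)
    (hleft : ∀ x : ℝ, Filter.Tendsto G (nhdsWithin x (Set.Iio x)) (nhds (G x)))
    (hG0 : ∀ p : ℝ, 0 ≤ G p) (hG1 : ∀ p : ℝ, G p ≤ 1)
    (hGneg : ∀ p : ℝ, p ≤ 0 → G p = 0)
    (hbddinv : ∀ t : ℝ, 0 ≤ t → t < 1 → BddAbove {p : ℝ | 0 ≤ p ∧ G p ≤ t})
    (pv : Fin n → ℝ) (hpv : ∀ i, 0 ≤ pv i) :
    ∃ q : Fin n → ℝ, (∀ i, 0 ≤ q i ∧ q i ≤ 1) ∧ (∑ i, q i ≤ 1) ∧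
      ∑ i, pv i * (1 - G (pv i)) * ∏ j ∈ Finset.Iio i, G (pv j)
        ≤ ∑ i, q i * sSup {p : ℝ | 0 ≤ p ∧ G p ≤ 1 - q i} := by
  set q : Fin n → ℝ := fun i => (1 - G (pv i)) * ∏ j ∈ Finset.Iio i, G (pv j) with hq
  have hprod_nonneg : ∀ i : Fin n, 0 ≤ ∏ j ∈ Finset.Iio i, G (pv j) :=
    fun i => Finset.prod_nonneg fun j _ => hG0 _
  have hprod_le_one : ∀ i : Fin n, ∏ j ∈ Finset.Iio i, G (pv j) ≤ 1 :=
    fun i => Finset.prod_le_one (fun j _ => hG0 _) (fun j _ => hG1 _)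
  have hq0 : ∀ i, 0 ≤ q i := fun i =>
    mul_nonneg (by linarith [hG1 (pv i)]) (hprod_nonneg i)
  have hq_le : ∀ i, q i ≤ 1 - G (pv i) := by
    intro i
    calc q i ≤ (1 - G (pv i)) * 1 :=
          mul_le_mul_of_nonneg_left (hprod_le_one i) (by linarith [hG1 (pv i)])
      _ = 1 - G (pv i) := mul_one _
  have hq1 : ∀ i, q i ≤ 1 := fun i => le_trans (hq_le i) (by linarith [hG0 (pv i)])
  refine ⟨q, fun i => ⟨hq0 i, hq1 i⟩, ?_, ?_⟩
  · -- sum ≤ 1 via telescoping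
    set g : ℕ → ℝ := fun j => if h : j < n then G (pv ⟨j, h⟩) else 0 with hg
    have hprod : ∀ i : Fin n, ∏ j ∈ Finset.Iio i, G (pv j)
        = ∏ j ∈ Finset.range i.val, g j := by
      intro i
      rw [← Nat.Iio_eq_range, ← Fin.map_valEmbedding_Iio, Finset.prod_map]
      refine Finset.prod_congr rfl fun j _ => ?_
      simp [hg, j.isLt]
    have : ∑ i, q i = ∑ i ∈ Finset.range n, (1 - g i) * ∏ j ∈ Finset.range i, g j := by
      rw [← Fin.sum_univ_eq_sum_range]
      refine Finset.sum_congr rfl fun i _ => ?_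
      simp only [hq, hprod i, hg]
      simp [i.isLt]
    rw [this, telescope_aux]
    have : (0:ℝ) ≤ ∏ j ∈ Finset.range n, g j :=
      Finset.prod_nonneg fun j _ => by by_cases h : j < n <;> simp [hg, h, hG0]
    linarith
  · refine Finset.sum_le_sum fun i _ => ?_
    have key : pv i * (1 - G (pv i)) * ∏ j ∈ Finset.Iio i, G (pv j) = q i * pv i := by
      rw [hq]; ring
    rw [key]
    rcases eq_or_lt_of_le (hq0 i) with h0 | h0
    · simp [← h0]
    · have ht0 : (0:ℝ) ≤ 1 - q i := by linarith [hq1 i]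
      have ht1 : 1 - q i < 1 := by linarith
      have hmem : pv i ∈ {p : ℝ | 0 ≤ p ∧ G p ≤ 1 - q i} :=
        ⟨hpv i, by linarith [hq_le i]⟩
      have := le_csSup (hbddinv _ ht0 ht1) hmem
      exact mul_le_mul_of_nonneg_left this (hq0 i)
end

section
/- Let n ≥ 1 be an integer, and let p_1,…,p_n ≥ 0 and g_1,…,g_n ∈ [0,1] be real numbers. Then there exists i ∈ {1,…,n} such that Σ_{j=1}^n p_j·(1−g_j)·Π_{k<j} g_k ≤ (2 − 1/n) · p_i·(1 − g_i^n). (Interpreting g_j = G(p_j) for a value distribution G, this says: for any vector of discriminatory prices, one of those prices used as an anonymous price achieves at least a (2−1/n)-fraction of the discriminatory revenue.) -/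
/-- Elementary inequality: for `g ∈ [0,1]`, `g^m * ((m+1) - m*g) ≤ 1`. -/
lemma aux_pow_le_one (m : ℕ) (g : ℝ) (h0 : 0 ≤ g) (h1 : g ≤ 1) :
    g ^ m * (((m : ℝ) + 1) - (m : ℝ) * g) ≤ 1 := by
  induction m with
  | zero => simp
  | succ m ih =>
    have hpm : (0:ℝ) ≤ g ^ m := pow_nonneg h0 m
    have hs : g ^ (m + 1) = g ^ m * g := pow_succ g m
    have key : g * (((m : ℝ) + 1 + 1) - ((m : ℝ) + 1) * g)
        ≤ (((m : ℝ) + 1) - (m : ℝ) * g) := by nlinarith [sq_nonneg (g - 1), Nat.cast_nonneg (α := ℝ) m]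
    push_cast
    calc g ^ (m + 1) * (((m : ℝ) + 1 + 1) - ((m : ℝ) + 1) * g)
        = g ^ m * (g * (((m : ℝ) + 1 + 1) - ((m : ℝ) + 1) * g)) := by rw [hs]; ring
      _ ≤ g ^ m * (((m : ℝ) + 1) - (m : ℝ) * g) := by
          exact mul_le_mul_of_nonneg_left key hpm
      _ ≤ 1 := ih

/-- For `g ∈ [0,1]` and `n ≥ 1`: `n*(1-g) ≤ (1-g^n)*(n-(n-1)*g)`. -/
lemma aux_key (n : ℕ) (hn : 1 ≤ n) (g : ℝ) (h0 : 0 ≤ g) (h1 : g ≤ 1) :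
    (n : ℝ) * (1 - g) ≤ (1 - g ^ n) * ((n : ℝ) - ((n : ℝ) - 1) * g) := by
  obtain ⟨m, rfl⟩ := Nat.exists_eq_add_of_le hn
  have h := aux_pow_le_one m g h0 h1
  have hs : g ^ (1 + m) = g ^ m * g := by rw [add_comm]; exact pow_succ g m
  push_cast
  rw [hs]
  nlinarith [mul_le_mul_of_nonneg_left h h0, pow_nonneg h0 m]

/-- Telescoping sum bound: `∑_{j<n} (1 - g j + g j / n) * ∏_{k<j} g k ≤ 2 - 1/n`. -/
lemma aux_sum (n : ℕ) (hn : 1 ≤ n) (g : ℕ → ℝ) (hg : ∀ k, 0 ≤ g k ∧ g k ≤ 1) :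
    ∑ j ∈ Finset.range n, (1 - g j + g j / (n : ℝ)) * ∏ k ∈ Finset.range j, g k
      ≤ 2 - 1 / (n : ℝ) := by
  set Q : ℕ → ℝ := fun j => ∏ k ∈ Finset.range j, g k with hQdef
  have hQ0 : ∀ j, 0 ≤ Q j := fun j => Finset.prod_nonneg fun k _ => (hg k).1
  have hQ1 : ∀ j, Q j ≤ 1 := fun j =>
    Finset.prod_le_one (fun k _ => (hg k).1) (fun k _ => (hg k).2)
  have hN : (1:ℝ) ≤ (n : ℝ) := by exact_mod_cast hn
  have hN0 : (0:ℝ) < (n : ℝ) := by linarith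
  have hc : (1 / (n : ℝ)) * n = 1 := by field_simp
  have hstep : ∀ j, (1 - g j + g j / (n : ℝ)) * Q j
      = Q j - (1 - 1 / (n : ℝ)) * Q (j + 1) := by
    intro j
    have : Q (j + 1) = Q j * g j := Finset.prod_range_succ g j
    rw [this]; ring
  rw [Finset.sum_congr rfl (fun j _ => hstep j), Finset.sum_sub_distrib, ← Finset.mul_sum]
  have h1 : ∑ j ∈ Finset.range n, Q (j + 1)
      = ∑ j ∈ Finset.range (n + 1), Q j - Q 0 := by
    rw [Finset.sum_range_succ' Q n]; ring
  have h2 : ∑ j ∈ Finset.range (n + 1), Q j = ∑ j ∈ Finset.range n, Q j + Q n :=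
    Finset.sum_range_succ Q n
  have hQ0' : Q 0 = 1 := by simp [hQdef]
  have hA : ∑ j ∈ Finset.range n, Q j ≤ (n : ℝ) := by
    calc ∑ j ∈ Finset.range n, Q j ≤ ∑ j ∈ Finset.range n, (1:ℝ) :=
          Finset.sum_le_sum fun j _ => hQ1 j
      _ = (n : ℝ) := by simp
  rw [h1, h2, hQ0']
  have hc1 : 1 / (n : ℝ) ≤ 1 := by
    rw [div_le_one hN0]; exact hN
  have hc0 : 0 < 1 / (n : ℝ) := by positivity
  nlinarith [hQ0 n, hQ1 n, mul_le_mul_of_nonneg_left hA (le_of_lt hc0),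
    mul_nonneg (sub_nonneg.mpr hc1) (hQ0 n)]

/-- Corollary 1: for any vector of discriminatory prices, one of those prices used as
an anonymous price achieves at least a `(2 - 1/n)`-fraction of the discriminatory
revenue.  Here `g j` plays the role of `G (p j)`. -/
theorem stmt_3 (n : ℕ) (hn : 1 ≤ n) (p g : Fin n → ℝ)
    (hp : ∀ j, 0 ≤ p j) (hg : ∀ j, 0 ≤ g j ∧ g j ≤ 1) :
    ∃ i : Fin n,
      ∑ j, p j * (1 - g j) * ∏ k ∈ Finset.Iio j, g k
        ≤ (2 - 1 / (n : ℝ)) * (p i * (1 - g i ^ n)) := by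
  have hN : (1:ℝ) ≤ (n : ℝ) := by exact_mod_cast hn
  have hN0 : (0:ℝ) < (n : ℝ) := by linarith
  -- pick the maximizer of the anonymous revenue
  obtain ⟨i, -, hmax⟩ := Finset.exists_max_image Finset.univ
    (fun i : Fin n => p i * (1 - g i ^ n))
    ⟨⟨0, hn⟩, Finset.mem_univ _⟩
  refine ⟨i, ?_⟩
  set M : ℝ := p i * (1 - g i ^ n) with hMdef
  have hM0 : 0 ≤ M := mul_nonneg (hp i)
    (sub_nonneg.mpr (pow_le_one₀ (hg i).1 (hg i).2))
  -- extend g to ℕ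
  set g' : ℕ → ℝ := fun k => if h : k < n then g ⟨k, h⟩ else 1 with hg'def
  have hg' : ∀ k, 0 ≤ g' k ∧ g' k ≤ 1 := by
    intro k
    by_cases h : k < n
    · simp only [hg'def, dif_pos h]; exact hg ⟨k, h⟩
    · simp [hg'def, dif_neg h]
  have hg'val : ∀ j : Fin n, g' (j : ℕ) = g j := by
    intro j; simp [hg'def, j.isLt]
  -- convert the Fin product to a ℕ product
  have hprod : ∀ j : Fin n, ∏ k ∈ Finset.Iio j, g k = ∏ k ∈ Finset.range (j : ℕ), g' k := by
    intro j
    rw [← Nat.Iio_eq_range, ← Fin.map_valEmbedding_Iio, Finset.prod_map]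
    exact Finset.prod_congr rfl fun k _ => (hg'val k).symm
  have hQ0 : ∀ j : Fin n, 0 ≤ ∏ k ∈ Finset.range (j : ℕ), g' k :=
    fun j => Finset.prod_nonneg fun k _ => (hg' k).1
  -- per-term bound
  have hterm : ∀ j : Fin n, p j * (1 - g j) ≤ M * (1 - g j + g j / (n : ℝ)) := by
    intro j
    have h1 : p j * (1 - g j ^ n) ≤ M := hmax j (Finset.mem_univ j)
    have h2 := aux_key n hn (g j) (hg j).1 (hg j).2
    have h3 : 0 ≤ (n : ℝ) - ((n : ℝ) - 1) * g j := by
      nlinarith [(hg j).1, (hg j).2]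
    have h4 : p j * ((n : ℝ) * (1 - g j)) ≤ p j * ((1 - g j ^ n) * ((n : ℝ) - ((n : ℝ) - 1) * g j)) :=
      mul_le_mul_of_nonneg_left h2 (hp j)
    have h5 : p j * (1 - g j ^ n) * ((n : ℝ) - ((n : ℝ) - 1) * g j)
        ≤ M * ((n : ℝ) - ((n : ℝ) - 1) * g j) :=
      mul_le_mul_of_nonneg_right h1 h3
    have hne : (n : ℝ) ≠ 0 := ne_of_gt hN0
    have h6 : (1 - g j + g j / (n : ℝ)) * n = (n : ℝ) - ((n : ℝ) - 1) * g j := by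
      field_simp; ring
    refine le_of_mul_le_mul_right ?_ hN0
    calc p j * (1 - g j) * (n : ℝ) = p j * ((n : ℝ) * (1 - g j)) := by ring
      _ ≤ p j * ((1 - g j ^ n) * ((n : ℝ) - ((n : ℝ) - 1) * g j)) := h4
      _ = p j * (1 - g j ^ n) * ((n : ℝ) - ((n : ℝ) - 1) * g j) := by ring
      _ ≤ M * ((n : ℝ) - ((n : ℝ) - 1) * g j) := h5
      _ = M * (1 - g j + g j / (n : ℝ)) * n := by rw [← h6]; ring
  calc ∑ j, p j * (1 - g j) * ∏ k ∈ Finset.Iio j, g k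
      ≤ ∑ j : Fin n, M * ((1 - g' (j:ℕ) + g' (j:ℕ) / (n : ℝ)) * ∏ k ∈ Finset.range (j:ℕ), g' k) := by
        refine Finset.sum_le_sum fun j _ => ?_
        rw [hprod j, ← mul_assoc]
        refine mul_le_mul_of_nonneg_right ?_ (hQ0 j)
        rw [hg'val j]
        exact hterm j
    _ = M * ∑ j ∈ Finset.range n, (1 - g' j + g' j / (n : ℝ)) * ∏ k ∈ Finset.range j, g' k := by
        rw [← Finset.mul_sum, Fin.sum_univ_eq_sum_range
          (fun m => (1 - g' m + g' m / (n : ℝ)) * ∏ k ∈ Finset.range m, g' k) n]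
    _ ≤ M * (2 - 1 / (n : ℝ)) := by
        exact mul_le_mul_of_nonneg_left (aux_sum n hn g' hg') hM0
    _ = (2 - 1 / (n : ℝ)) * (p i * (1 - g i ^ n)) := by rw [hMdef]; ring
end

section
/- For every integer n ≥ 1: (i) for every x ∈ (0,1]^n with Σ_{i=1}^n x_i ≤ 1 one has Σ_{i=1}^n x_i/(1−(1−x_i)^n) ≤ 2 − 1/n; and (ii) the supremum of Σ_{i=1}^n x_i/(1−(1−x_i)^n) over all x ∈ (0,1]^n with Σ_{i=1}^n x_i ≤ 1 equals 2 − 1/n. -/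
open Finset

lemma key_ineq (n : ℕ) (hn : 1 ≤ n) (y : ℝ) (hy0 : 0 ≤ y) (hy1 : y ≤ 1) :
    (n : ℝ) ≤ ((n : ℝ) - ((n : ℝ) - 1) * y) * ∑ k ∈ range n, y ^ k := by
  have hn1 : (1 : ℝ) ≤ (n : ℝ) := by exact_mod_cast hn
  set S := ∑ k ∈ range n, y ^ k with hSdef
  have hgeom : (1 - y) * S = 1 - y ^ n := by
    have h := geom_sum_mul y n
    rw [hSdef]; nlinarith [h]
  have hSbig : 1 + ((n : ℝ) - 1) * y ^ n ≤ S := by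
    have h0 : (0 : Fin 1) = 0 := rfl
    have hmem : 0 ∈ range n := mem_range.mpr hn
    have hsplit : S = y ^ 0 + ∑ k ∈ (range n).erase 0, y ^ k :=
      (Finset.add_sum_erase _ _ hmem).symm
    have hterm : ∀ k ∈ (range n).erase 0, y ^ n ≤ y ^ k := by
      intro k hk
      exact pow_le_pow_of_le_one hy0 hy1 (le_of_lt (mem_range.mp (mem_of_mem_erase hk)))
    have hcard : ((range n).erase 0).card = n - 1 := by
      rw [card_erase_of_mem hmem, card_range]
    have hsum : ((n : ℝ) - 1) * y ^ n ≤ ∑ k ∈ (range n).erase 0, y ^ k := by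
      have := Finset.card_nsmul_le_sum ((range n).erase 0) (fun k => y ^ k) (y ^ n) hterm
      rw [hcard, nsmul_eq_mul] at this
      have hc : ((n - 1 : ℕ) : ℝ) = (n : ℝ) - 1 := by
        push_cast [Nat.cast_sub hn]; ring
      rwa [hc] at this
    rw [hsplit, pow_zero]
    linarith
  have e1 : ((n : ℝ) - ((n : ℝ) - 1) * y) * S = S + ((n : ℝ) - 1) * ((1 - y) * S) := by ring
  rw [e1, hgeom]
  nlinarith [hSbig]

lemma fbound (n : ℕ) (hn : 1 ≤ n) (x : ℝ) (hx0 : 0 < x) (hx1 : x ≤ 1) :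
    x / (1 - (1 - x) ^ n) ≤ 1 / (n : ℝ) + (1 - 1 / (n : ℝ)) * x := by
  have hnpos : (0 : ℝ) < n := by exact_mod_cast hn
  set y := 1 - x with hy
  have hy0 : 0 ≤ y := by simp [hy]; linarith
  have hy1 : y < 1 := by simp [hy]; linarith
  set S := ∑ k ∈ range n, y ^ k with hSdef
  have hgeom : (1 - y) * S = 1 - y ^ n := by
    have h := geom_sum_mul y n
    rw [hSdef]; nlinarith [h]
  have hden : 1 - (1 - x) ^ n = x * S := by
    rw [← hgeom]; simp [hy]
  have hdpos : 0 < 1 - (1 - x) ^ n := by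
    have : (1 - x) ^ n < 1 := pow_lt_one₀ hy0 hy1 (by omega)
    linarith
  have hSpos : 0 < S := by
    rw [hden] at hdpos
    rcases mul_pos_iff.mp hdpos with ⟨_, h⟩ | ⟨h, _⟩
    · exact h
    · linarith
  have hx_div : x / (1 - (1 - x) ^ n) = 1 / S := by
    rw [hden]; field_simp
  rw [hx_div]
  have h2 : 1 / (n : ℝ) + (1 - 1 / (n : ℝ)) * x = ((n : ℝ) - ((n : ℝ) - 1) * y) / n := by
    field_simp [hy]; ring
  rw [h2, div_le_div_iff₀ hSpos hnpos, one_mul]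
  have := key_ineq n hn y hy0 (le_of_lt hy1)
  linarith

lemma flow1 (n : ℕ) (hn : 1 ≤ n) (x : ℝ) (hx0 : 0 < x) (hx1 : x ≤ 1) :
    x ≤ x / (1 - (1 - x) ^ n) := by
  have hy0 : 0 ≤ 1 - x := by linarith
  have hdpos : 0 < 1 - (1 - x) ^ n := by
    have : (1 - x) ^ n < 1 := pow_lt_one₀ hy0 (by linarith) (by omega)
    linarith
  rw [le_div_iff₀ hdpos]
  nlinarith [pow_nonneg hy0 n]

lemma flow2 (n : ℕ) (hn : 1 ≤ n) (x : ℝ) (hx0 : 0 < x) (hx1 : x ≤ 1) :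
    1 / (n : ℝ) ≤ x / (1 - (1 - x) ^ n) := by
  have hnpos : (0 : ℝ) < n := by exact_mod_cast hn
  have hy0 : 0 ≤ 1 - x := by linarith
  have hdpos : 0 < 1 - (1 - x) ^ n := by
    have : (1 - x) ^ n < 1 := pow_lt_one₀ hy0 (by linarith) (by omega)
    linarith
  rw [div_le_div_iff₀ hnpos hdpos, one_mul]
  have hbern : 1 + (n : ℝ) * (-x) ≤ (1 + (-x)) ^ n := one_add_mul_le_pow (by linarith) n
  have h2 : (1 : ℝ) - n * x ≤ (1 - x) ^ n := by
    have e : (1 : ℝ) + (-x) = 1 - x := by ring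
    rw [e] at hbern; linarith
  nlinarith

/-- The mathematical program in the proof of Theorem 3: on the simplex, the value of
`∑ i, x i / (1 - (1 - x i)^n)` is at most `2 - 1/n`, and its supremum equals `2 - 1/n`. -/
theorem stmt_4 (n : ℕ) (hn : 1 ≤ n) :
    (∀ x : Fin n → ℝ, (∀ i, 0 < x i ∧ x i ≤ 1) → ∑ i, x i ≤ 1 →
        ∑ i, x i / (1 - (1 - x i) ^ n) ≤ 2 - 1 / (n : ℝ)) ∧
    sSup {s : ℝ | ∃ x : Fin n → ℝ, (∀ i, 0 < x i ∧ x i ≤ 1) ∧ (∑ i, x i ≤ 1) ∧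
        s = ∑ i, x i / (1 - (1 - x i) ^ n)} = 2 - 1 / (n : ℝ) := by
  have hnpos : (0 : ℝ) < n := by exact_mod_cast hn
  have hn1 : (1 : ℝ) ≤ n := by exact_mod_cast hn
  have hinv1 : 1 / (n : ℝ) ≤ 1 := by rw [div_le_one hnpos]; exact hn1
  have part1 : ∀ x : Fin n → ℝ, (∀ i, 0 < x i ∧ x i ≤ 1) → ∑ i, x i ≤ 1 →
      ∑ i, x i / (1 - (1 - x i) ^ n) ≤ 2 - 1 / (n : ℝ) := by
    intro x hx hsum
    have h1 : ∑ i, x i / (1 - (1 - x i) ^ n)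
        ≤ ∑ i : Fin n, (1 / (n : ℝ) + (1 - 1 / (n : ℝ)) * x i) :=
      Finset.sum_le_sum fun i _ => fbound n hn (x i) (hx i).1 (hx i).2
    have h2 : ∑ i : Fin n, (1 / (n : ℝ) + (1 - 1 / (n : ℝ)) * x i)
        = 1 + (1 - 1 / (n : ℝ)) * ∑ i, x i := by
      rw [Finset.sum_add_distrib, Finset.sum_const, ← Finset.mul_sum, card_univ,
        Fintype.card_fin, nsmul_eq_mul]
      field_simp
    rw [h2] at h1
    nlinarith [hsum]
  refine ⟨part1, ?_⟩
  have hA_ub : ∀ s ∈ {s : ℝ | ∃ x : Fin n → ℝ, (∀ i, 0 < x i ∧ x i ≤ 1) ∧ (∑ i, x i ≤ 1) ∧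
      s = ∑ i, x i / (1 - (1 - x i) ^ n)}, s ≤ 2 - 1 / (n : ℝ) := by
    rintro s ⟨x, hx, hsum, rfl⟩
    exact part1 x hx hsum
  have hA_ne : Set.Nonempty {s : ℝ | ∃ x : Fin n → ℝ, (∀ i, 0 < x i ∧ x i ≤ 1) ∧
      (∑ i, x i ≤ 1) ∧ s = ∑ i, x i / (1 - (1 - x i) ^ n)} := by
    refine ⟨∑ i : Fin n, (1 / (n : ℝ)) / (1 - (1 - 1 / (n : ℝ)) ^ n),
      fun _ => 1 / (n : ℝ), fun i => ⟨by positivity, hinv1⟩, ?_, rfl⟩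
    rw [Finset.sum_const, card_univ, Fintype.card_fin, nsmul_eq_mul]
    rw [mul_one_div, div_le_one hnpos]
  have hbdd : BddAbove {s : ℝ | ∃ x : Fin n → ℝ, (∀ i, 0 < x i ∧ x i ≤ 1) ∧
      (∑ i, x i ≤ 1) ∧ s = ∑ i, x i / (1 - (1 - x i) ^ n)} := ⟨2 - 1 / (n : ℝ), hA_ub⟩
  refine le_antisymm (csSup_le hA_ne hA_ub) ?_
  refine le_of_forall_pos_le_add ?_
  intro δ hδ
  obtain ⟨c, hc⟩ : ∃ c : ℝ, c = (n : ℝ) - 1 := ⟨_, rfl⟩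
  have hc0 : 0 ≤ c := by rw [hc]; linarith
  obtain ⟨ε, hε⟩ : ∃ ε : ℝ, ε = min (1 / (n : ℝ)) (δ / n) := ⟨_, rfl⟩
  have hε0 : 0 < ε := hε ▸ lt_min (by positivity) (by positivity)
  have hε1 : ε ≤ 1 / (n : ℝ) := hε ▸ min_le_left _ _
  have hε2 : ε ≤ δ / n := hε ▸ min_le_right _ _
  have hεle1 : ε ≤ 1 := le_trans hε1 hinv1
  obtain ⟨i0, _⟩ : ∃ i0 : Fin n, i0 = ⟨0, hn⟩ := ⟨_, rfl⟩
  obtain ⟨x, hxval⟩ : ∃ x : Fin n → ℝ, ∀ i, x i = if i = i0 then 1 - c * ε else ε :=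
    ⟨fun i => if i = i0 then 1 - c * ε else ε, fun i => rfl⟩
  have hcε : c * ε ≤ c / n := by
    rw [div_eq_mul_one_div]
    exact mul_le_mul_of_nonneg_left hε1 hc0
  have hcn : c / n < 1 := by
    rw [div_lt_one hnpos, hc]; linarith
  have hx0pos : 0 < 1 - c * ε := by linarith
  have hx0le : 1 - c * ε ≤ 1 := by nlinarith
  have hxprop : ∀ i, 0 < x i ∧ x i ≤ 1 := by
    intro i
    by_cases h : i = i0
    · rw [hxval i, if_pos h]; exact ⟨hx0pos, hx0le⟩
    · rw [hxval i, if_neg h]; exact ⟨hε0, hεle1⟩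
  have hcardc : ((univ.erase i0).card : ℝ) = c := by
    rw [card_erase_of_mem (mem_univ i0), card_univ, Fintype.card_fin, hc]
    push_cast [Nat.cast_sub hn]; ring
  have hsumx : ∑ i, x i = 1 := by
    rw [← Finset.add_sum_erase _ x (mem_univ i0)]
    have he : ∑ i ∈ univ.erase i0, x i = ∑ _i ∈ univ.erase i0, ε :=
      Finset.sum_congr rfl fun i hi => by
        rw [hxval i, if_neg (Finset.ne_of_mem_erase hi)]
    rw [he, Finset.sum_const, nsmul_eq_mul, hcardc, hxval i0, if_pos rfl]
    ring
  have hval : 2 - 1 / (n : ℝ) - δ ≤ ∑ i, x i / (1 - (1 - x i) ^ n) := by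
    rw [← Finset.add_sum_erase _ (fun i => x i / (1 - (1 - x i) ^ n)) (mem_univ i0)]
    have h1 : 1 - c * ε ≤ x i0 / (1 - (1 - x i0) ^ n) := by
      have h := flow1 n hn (x i0) (hxprop i0).1 (hxprop i0).2
      have hxi0 : x i0 = 1 - c * ε := by rw [hxval i0, if_pos rfl]
      linarith [hxi0 ▸ h]
    have h2 : c * (1 / (n : ℝ)) ≤ ∑ i ∈ univ.erase i0, x i / (1 - (1 - x i) ^ n) := by
      have hterm : ∀ i ∈ univ.erase i0, 1 / (n : ℝ) ≤ x i / (1 - (1 - x i) ^ n) :=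
        fun i _ => flow2 n hn (x i) (hxprop i).1 (hxprop i).2
      have h := Finset.card_nsmul_le_sum (univ.erase i0)
        (fun i => x i / (1 - (1 - x i) ^ n)) (1 / (n : ℝ)) hterm
      rwa [nsmul_eq_mul, hcardc] at h
    have hcεδ : c * ε ≤ δ := by
      have h3 : c * ε ≤ (n : ℝ) * ε := by
        apply mul_le_mul_of_nonneg_right _ (le_of_lt hε0); rw [hc]; linarith
      have h4 : (n : ℝ) * ε ≤ (n : ℝ) * (δ / n) := mul_le_mul_of_nonneg_left hε2 (le_of_lt hnpos)
      have h5 : (n : ℝ) * (δ / n) = δ := by field_simp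
      linarith
    have hcn' : c * (1 / (n : ℝ)) = 1 - 1 / n := by
      rw [hc]; field_simp
    linarith
  have hmem : (∑ i, x i / (1 - (1 - x i) ^ n)) ∈ {s : ℝ | ∃ x : Fin n → ℝ,
      (∀ i, 0 < x i ∧ x i ≤ 1) ∧ (∑ i, x i ≤ 1) ∧ s = ∑ i, x i / (1 - (1 - x i) ^ n)} :=
    ⟨x, hxprop, le_of_eq hsumx, rfl⟩
  have hle := le_csSup hbdd hmem
  linarith
end

section
/- For every integer n ≥ 2, the function h(x) = x/(1−(1−x)^n) has strictly positive second derivative at every x ∈ (0,1); in particular h is strictly convex on the open interval (0,1). (Consequently, the separable function g(x_1,…,x_n) = Σ_{i=1}^n x_i/(1−(1−x_i)^n) has strictly monotone partial derivatives, so at any interior critical point of g on the simplex all coordinates are equal.) -/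
/-!
Write `u = 1 - x`. The quotient rule gives
`h''(x) = n u^(n-2) P(u) / (1 - u^n)^3` with
`P(u) = (n-1) - (n+1) u + (n+1) u^n - (n-1) u^(n+1)`, so everything hinges on `P > 0` on `(0,1)`.
This follows from the factorisation `P(u) = (1 - u) ∑_{k=1}^{n-1} (1 - u^k)(1 - u^(n-k))`,
whose summands are all positive there.
-/

open Finset Topology

def secondDerivNumerator {R : Type*} [CommRing R] (n : ℕ) (u : R) : R :=
  (n - 1) - (n + 1) * u + (n + 1) * u ^ n - (n - 1) * u ^ (n + 1)

theorem one_sub_mul_sum_Ico_eq_secondDerivNumerator {R : Type*} [CommRing R] (u : R) {n : ℕ}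
    (hn : 1 ≤ n) :
    (1 - u) * ∑ k ∈ Ico 1 n, (1 - u ^ k) * (1 - u ^ (n - k)) = secondDerivNumerator n u := by
  have hterm : ∀ k ∈ Ico 1 n,
      (1 - u ^ k) * (1 - u ^ (n - k)) = 1 + u ^ n - u ^ k - u ^ (n - k) := by
    intro k hk
    linear_combination pow_mul_pow_sub u (mem_Ico.1 hk).2.le
  have hreflect : ∑ k ∈ Ico 1 n, u ^ (n - k) = ∑ k ∈ Ico 1 n, u ^ k := by
    simpa using sum_Ico_reflect (fun j => u ^ j) 1 (m := n) (n := n) (by omega)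
  rw [sum_congr rfl hterm, sum_sub_distrib, sum_sub_distrib, hreflect, sum_const, Nat.card_Ico,
    nsmul_eq_mul, Nat.cast_sub hn, secondDerivNumerator]
  linear_combination (-2) * geom_sum_Ico_mul_neg u hn

theorem secondDerivNumerator_pos {u : ℝ} (hu : u ∈ Set.Ioo 0 1) {n : ℕ} (hn : 2 ≤ n) :
    0 < secondDerivNumerator n u := by
  rw [← one_sub_mul_sum_Ico_eq_secondDerivNumerator u (by omega)]
  refine mul_pos (by linarith [hu.2]) (sum_pos (fun k hk => ?_) ⟨1, mem_Ico.2 ⟨le_rfl, hn⟩⟩)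
  rw [mem_Ico] at hk
  exact mul_pos (sub_pos.2 (pow_lt_one₀ hu.1.le hu.2 (by omega)))
    (sub_pos.2 (pow_lt_one₀ hu.1.le hu.2 (by omega)))

theorem one_sub_one_sub_pow_pos {x : ℝ} (hx : x ∈ Set.Ioo 0 1) {n : ℕ} (hn : n ≠ 0) :
    0 < 1 - (1 - x) ^ n :=
  sub_pos.2 (pow_lt_one₀ (by linarith [hx.2]) (by linarith [hx.1]) hn)

theorem hasDerivAt_one_sub_pow (n : ℕ) (x : ℝ) :
    HasDerivAt (fun x : ℝ => (1 - x) ^ n) (-(n * (1 - x) ^ (n - 1))) x := by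
  simpa using ((hasDerivAt_id' x).const_sub 1).fun_pow n

theorem hasDerivAt_div_one_sub_one_sub_pow (n : ℕ) {x : ℝ} (hx : 1 - (1 - x) ^ n ≠ 0) :
    HasDerivAt (fun x : ℝ => x / (1 - (1 - x) ^ n))
      ((1 - (1 - x) ^ n - n * x * (1 - x) ^ (n - 1)) / (1 - (1 - x) ^ n) ^ 2) x := by
  refine ((hasDerivAt_id' x).fun_div
    ((hasDerivAt_one_sub_pow n x).const_sub 1) hx).congr_deriv ?_
  ring

theorem hasDerivAt_deriv_div_one_sub_one_sub_pow {n : ℕ} (hn : 2 ≤ n) {x : ℝ}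
    (hx : 1 - (1 - x) ^ n ≠ 0) :
    HasDerivAt
      (fun x : ℝ => (1 - (1 - x) ^ n - n * x * (1 - x) ^ (n - 1)) / (1 - (1 - x) ^ n) ^ 2)
      (n * (1 - x) ^ (n - 2) * secondDerivNumerator n (1 - x) / (1 - (1 - x) ^ n) ^ 3) x := by
  have hD := (hasDerivAt_one_sub_pow n x).const_sub 1
  have hnum := hD.fun_sub
    (((hasDerivAt_id' x).const_mul (n : ℝ)).fun_mul (hasDerivAt_one_sub_pow (n - 1) x))
  refine (hnum.fun_div (hD.fun_pow 2) (pow_ne_zero 2 hx)).congr_deriv ?_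
  obtain ⟨m, rfl⟩ : ∃ m, n = m + 2 := ⟨n - 2, by omega⟩
  simp only [secondDerivNumerator, Nat.add_sub_cancel, show m + 2 - 1 = m + 1 by omega]
  push_cast
  field_simp
  -- `ring` only expands symbolic powers of atoms, so make `1 - x` one
  obtain ⟨u, rfl⟩ : ∃ u, x = 1 - u := ⟨1 - x, by ring⟩
  ring

theorem deriv_deriv_div_one_sub_one_sub_pow {n : ℕ} (hn : 2 ≤ n) {x : ℝ}
    (hx : x ∈ Set.Ioo 0 1) :
    deriv (deriv fun x : ℝ => x / (1 - (1 - x) ^ n)) x =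
      n * (1 - x) ^ (n - 2) * secondDerivNumerator n (1 - x) / (1 - (1 - x) ^ n) ^ 3 := by
  have hderiv : deriv (fun x : ℝ => x / (1 - (1 - x) ^ n)) =ᶠ[𝓝 x]
      fun x => (1 - (1 - x) ^ n - n * x * (1 - x) ^ (n - 1)) / (1 - (1 - x) ^ n) ^ 2 :=
    Filter.eventually_of_mem (isOpen_Ioo.mem_nhds hx) fun y hy =>
      (hasDerivAt_div_one_sub_one_sub_pow n (one_sub_one_sub_pow_pos hy (by omega)).ne').deriv
  rw [hderiv.deriv_eq]
  exact (hasDerivAt_deriv_div_one_sub_one_sub_pow hn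
    (one_sub_one_sub_pow_pos hx (by omega)).ne').deriv

theorem deriv_deriv_div_one_sub_one_sub_pow_pos {n : ℕ} (hn : 2 ≤ n) {x : ℝ}
    (hx : x ∈ Set.Ioo 0 1) : 0 < deriv (deriv fun x : ℝ => x / (1 - (1 - x) ^ n)) x := by
  have hu : 1 - x ∈ Set.Ioo 0 1 := ⟨by linarith [hx.2], by linarith [hx.1]⟩
  rw [deriv_deriv_div_one_sub_one_sub_pow hn hx]
  exact div_pos (mul_pos (mul_pos (Nat.cast_pos.2 (by omega)) (pow_pos hu.1 _))
    (secondDerivNumerator_pos hu hn)) (pow_pos (one_sub_one_sub_pow_pos hx (by omega)) 3)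

/-- Lemma 3 (second-derivative computation): for `n ≥ 2`, the function
`h x = x / (1 - (1 - x)^n)` has strictly positive second derivative on `(0,1)`,
hence is strictly convex there. -/
theorem stmt_5 (n : ℕ) (hn : 2 ≤ n) :
    (∀ x ∈ Set.Ioo (0 : ℝ) 1,
        0 < iteratedDeriv 2 (fun x : ℝ => x / (1 - (1 - x) ^ n)) x) ∧
    StrictConvexOn ℝ (Set.Ioo (0 : ℝ) 1) (fun x : ℝ => x / (1 - (1 - x) ^ n)) := by
  have hpos : ∀ x ∈ Set.Ioo (0 : ℝ) 1,
      0 < deriv^[2] (fun x : ℝ => x / (1 - (1 - x) ^ n)) x :=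
    fun x hx => deriv_deriv_div_one_sub_one_sub_pow_pos hn hx
  refine ⟨fun x hx => ?_,
    strictConvexOn_of_deriv2_pos' (convex_Ioo 0 1) (fun x hx => ?_) hpos⟩
  · rw [iteratedDeriv_eq_iterate]
    exact hpos x hx
  · exact (hasDerivAt_div_one_sub_one_sub_pow n
      (one_sub_one_sub_pow_pos hx (by omega)).ne').continuousAt.continuousWithinAt
end

section
/- For every integer n ≥ 1, the function z ↦ z/(1−(1−z)^n) is monotone increasing on (0,1]: for all real z_1, z_2 with 0 < z_1 ≤ z_2 ≤ 1, one has z_1/(1−(1−z_1)^n) ≤ z_2/(1−(1−z_2)^n). -/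
open Finset

/-- Factoring `1 - (1 - z) ^ n = z * ∑_{k<n} (1 - z) ^ k` turns the quotient into the reciprocal of a
geometric sum, which has no singularity at `z = 0` (there Lean's junk value `0 / 0 = 0` intervenes). -/
lemma div_one_sub_one_sub_pow_eq_inv_geom_sum {K : Type*} [Field K] {z : K} (hz : z ≠ 0) (n : ℕ) :
    z / (1 - (1 - z) ^ n) = (∑ k ∈ range n, (1 - z) ^ k)⁻¹ := by
  rw [← mul_neg_geom_sum, sub_sub_cancel, div_mul_cancel_left₀ hz]

lemma geom_sum_le_geom_sum {R : Type*} [Semiring R] [PartialOrder R] [IsOrderedRing R]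
    {x y : R} (hx : 0 ≤ x) (hxy : x ≤ y) (n : ℕ) :
    ∑ k ∈ range n, x ^ k ≤ ∑ k ∈ range n, y ^ k :=
  sum_le_sum fun k _ => pow_le_pow_left₀ hx hxy k

/-- Lemma 4: the function `z ↦ z / (1 - (1 - z)^n)` is monotone increasing on `(0, 1]`. -/
theorem stmt_6 (n : ℕ) (hn : 1 ≤ n) (z₁ z₂ : ℝ)
    (h1 : 0 < z₁) (h12 : z₁ ≤ z₂) (h2 : z₂ ≤ 1) :
    z₁ / (1 - (1 - z₁) ^ n) ≤ z₂ / (1 - (1 - z₂) ^ n) := by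
  rw [div_one_sub_one_sub_pow_eq_inv_geom_sum h1.ne',
    div_one_sub_one_sub_pow_eq_inv_geom_sum (h1.trans_le h12).ne']
  exact inv_anti₀ (geom_sum_pos (by linarith) (by omega))
    (geom_sum_le_geom_sum (by linarith) (by linarith) n)
end

section
/- For every integer n ≥ 1 and every regular value distribution represented by G as in the context (i.e., the revenue curve q ↦ q·invG(1−q) is concave on (0,1]), if the set {p(1−G(p)^n) : p ≥ 0} is bounded above, then R^x_n ≤ (1/(1−(1−1/n)^n))·R^a_n; equivalently, for every q ∈ [0,1]^n with Σ_{i=1}^n q_i ≤ 1 one has Σ_{i=1}^n q_i·invG(1−q_i) ≤ (1/(1−(1−1/n)^n))·sup_{p≥0} p(1−G(p)^n). -/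
open Filter Set

lemma aux_G_sSup_le (G : ℝ → ℝ) (hmono : Monotone G)
    (hleft : ∀ x : ℝ, Filter.Tendsto G (nhdsWithin x (Set.Iio x)) (nhds (G x)))
    (hGneg : ∀ p : ℝ, p ≤ 0 → G p = 0)
    (t : ℝ) (ht0 : 0 ≤ t) (hbdd : BddAbove {p : ℝ | 0 ≤ p ∧ G p ≤ t}) :
    G (sSup {p : ℝ | 0 ≤ p ∧ G p ≤ t}) ≤ t := by
  set S := {p : ℝ | 0 ≤ p ∧ G p ≤ t} with hS
  have h0S : (0:ℝ) ∈ S := ⟨le_refl 0, by rw [hGneg 0 le_rfl]; exact ht0⟩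
  have hne : S.Nonempty := ⟨0, h0S⟩
  set p := sSup S with hp
  have hlt : ∀ x ∈ Set.Iio p, G x ≤ t := by
    intro x hx
    obtain ⟨y, hyS, hxy⟩ := exists_lt_of_lt_csSup hne hx
    exact le_trans (hmono hxy.le) hyS.2
  exact le_of_tendsto (hleft p) (eventually_nhdsWithin_of_forall hlt)

lemma aux_price (n : ℕ) (G : ℝ → ℝ) (hmono : Monotone G)
    (hleft : ∀ x : ℝ, Filter.Tendsto G (nhdsWithin x (Set.Iio x)) (nhds (G x)))
    (hG0 : ∀ p : ℝ, 0 ≤ G p)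
    (hGneg : ∀ p : ℝ, p ≤ 0 → G p = 0)
    (hbddinv : ∀ t : ℝ, 0 ≤ t → t < 1 → BddAbove {p : ℝ | 0 ≤ p ∧ G p ≤ t})
    (hbddrev : BddAbove {r : ℝ | ∃ p : ℝ, 0 ≤ p ∧ r = p * (1 - (G p) ^ n)})
    (u : ℝ) (hu0 : 0 < u) (hu1 : u ≤ 1) :
    sSup {p : ℝ | 0 ≤ p ∧ G p ≤ 1 - u} * (1 - (1 - u) ^ n)
      ≤ sSup {r : ℝ | ∃ p : ℝ, 0 ≤ p ∧ r = p * (1 - (G p) ^ n)} := by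
  set S := {p : ℝ | 0 ≤ p ∧ G p ≤ 1 - u} with hS
  have ht0 : (0:ℝ) ≤ 1 - u := by linarith
  have ht1 : (1:ℝ) - u < 1 := by linarith
  have hbdd := hbddinv _ ht0 ht1
  have h0S : (0:ℝ) ∈ S := ⟨le_rfl, by rw [hGneg 0 le_rfl]; exact ht0⟩
  set p := sSup S with hp
  have hp0 : 0 ≤ p := le_csSup hbdd h0S
  have hGp : G p ≤ 1 - u := aux_G_sSup_le G hmono hleft hGneg _ ht0 hbdd
  have h1 : p * (1 - (1 - u) ^ n) ≤ p * (1 - (G p) ^ n) := by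
    apply mul_le_mul_of_nonneg_left _ hp0
    have := pow_le_pow_left₀ (hG0 p) hGp n
    linarith
  have h2 : p * (1 - (G p) ^ n)
      ≤ sSup {r : ℝ | ∃ p : ℝ, 0 ≤ p ∧ r = p * (1 - (G p) ^ n)} :=
    le_csSup hbddrev ⟨p, hp0, rfl⟩
  linarith

/-- Theorem 5 (regular distributions): if the revenue curve `q ↦ q · invG (1-q)` is
concave on `(0,1]`, then the ex-ante relaxation revenue is at most
`1/(1 - (1 - 1/n)^n)` times the optimal anonymous-price revenue. -/
theorem stmt_11 (n : ℕ) (hn : 1 ≤ n) (G : ℝ → ℝ)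
    (hmono : Monotone G)
    (hleft : ∀ x : ℝ, Filter.Tendsto G (nhdsWithin x (Set.Iio x)) (nhds (G x)))
    (hG0 : ∀ p : ℝ, 0 ≤ G p) (hG1 : ∀ p : ℝ, G p ≤ 1)
    (hGneg : ∀ p : ℝ, p ≤ 0 → G p = 0)
    (hbddinv : ∀ t : ℝ, 0 ≤ t → t < 1 → BddAbove {p : ℝ | 0 ≤ p ∧ G p ≤ t})
    (hreg : ConcaveOn ℝ (Set.Ioc (0 : ℝ) 1)
      (fun u : ℝ => u * sSup {p : ℝ | 0 ≤ p ∧ G p ≤ 1 - u}))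
    (hbddrev : BddAbove {r : ℝ | ∃ p : ℝ, 0 ≤ p ∧ r = p * (1 - (G p) ^ n)})
    (q : Fin n → ℝ) (hq0 : ∀ i, 0 ≤ q i) (hq1 : ∀ i, q i ≤ 1)
    (hqsum : ∑ i, q i ≤ 1) :
    ∑ i, q i * sSup {p : ℝ | 0 ≤ p ∧ G p ≤ 1 - q i}
      ≤ (1 / (1 - (1 - 1 / (n : ℝ)) ^ n)) *
          sSup {r : ℝ | ∃ p : ℝ, 0 ≤ p ∧ r = p * (1 - (G p) ^ n)} := by
  have hnR : (1:ℝ) ≤ (n:ℝ) := by exact_mod_cast hn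
  have hn0 : (0:ℝ) < (n:ℝ) := lt_of_lt_of_le one_pos hnR
  set Ra := sSup {r : ℝ | ∃ p : ℝ, 0 ≤ p ∧ r = p * (1 - (G p) ^ n)} with hRadef
  have hRa0 : 0 ≤ Ra := le_csSup hbddrev ⟨0, le_rfl, by ring⟩
  set B := 1 - (1 - 1 / (n : ℝ)) ^ n with hBdef
  have hbase0 : (0:ℝ) ≤ 1 - 1 / (n:ℝ) := by
    have : 1 / (n:ℝ) ≤ 1 := by
      rw [div_le_one hn0]; exact hnR
    linarith
  have hbase1 : 1 - 1 / (n:ℝ) < 1 := by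
    have : 0 < 1 / (n:ℝ) := by positivity
    linarith
  have hB : 0 < B := by
    have := pow_lt_one₀ hbase0 hbase1 (by omega : n ≠ 0)
    simp only [hBdef]; linarith
  set T := Finset.univ.filter (fun i : Fin n => 0 < q i) with hTdef
  have hsum_eq : ∑ i ∈ T, q i * sSup {p : ℝ | 0 ≤ p ∧ G p ≤ 1 - q i}
      = ∑ i, q i * sSup {p : ℝ | 0 ≤ p ∧ G p ≤ 1 - q i} := by
    apply Finset.sum_subset (Finset.filter_subset _ _)
    intro i _ hi
    have : q i = 0 := le_antisymm (not_lt.mp (by simpa [hTdef] using hi)) (hq0 i)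
    rw [this]; ring
  rw [← hsum_eq]
  rcases T.eq_empty_or_nonempty with hT | hTne
  · rw [hT, Finset.sum_empty]
    exact mul_nonneg (by positivity) hRa0
  · set m := T.card with hmdef
    have hm : 0 < m := Finset.card_pos.mpr hTne
    have hmR : (0:ℝ) < (m:ℝ) := by exact_mod_cast hm
    have hmn : m ≤ n := by
      calc m ≤ Finset.univ.card := Finset.card_le_univ T
      _ = n := by simp
    have hmnR : (m:ℝ) ≤ (n:ℝ) := by exact_mod_cast hmn
    set s := ∑ i ∈ T, q i with hsdef
    have hs0 : 0 < s :=
      Finset.sum_pos (fun i hi => (Finset.mem_filter.mp hi).2) hTne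
    have hs1 : s ≤ 1 := by
      refine le_trans ?_ hqsum
      exact Finset.sum_le_sum_of_subset_of_nonneg (Finset.filter_subset _ _)
        (fun i _ _ => hq0 i)
    have hm1R : (1:ℝ) ≤ (m:ℝ) := by exact_mod_cast hm
    set u := s / (m:ℝ) with hudef
    have hu0 : 0 < u := div_pos hs0 hmR
    have hu1 : u ≤ 1 := by
      rw [hudef, div_le_one hmR]; linarith
    -- Jensen
    have hjen := hreg.le_map_sum (t := T) (w := fun _ => (m:ℝ)⁻¹) (p := q)
      (fun i _ => by positivity)
      (by
        rw [Finset.sum_const, nsmul_eq_mul, ← hmdef, mul_inv_cancel₀ (ne_of_gt hmR)])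
      (fun i hi => ⟨(Finset.mem_filter.mp hi).2, hq1 i⟩)
    have hpt : ∑ i ∈ T, (m:ℝ)⁻¹ • q i = u := by
      simp only [smul_eq_mul, ← Finset.mul_sum, ← hsdef, hudef]
      rw [inv_mul_eq_div]
    rw [hpt] at hjen
    simp only [smul_eq_mul] at hjen
    have hjen' : ∑ i ∈ T, q i * sSup {p : ℝ | 0 ≤ p ∧ G p ≤ 1 - q i}
        ≤ s * sSup {p : ℝ | 0 ≤ p ∧ G p ≤ 1 - u} := by
      have := mul_le_mul_of_nonneg_left hjen hmR.le
      rw [Finset.mul_sum] at this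
      calc ∑ i ∈ T, q i * sSup {p : ℝ | 0 ≤ p ∧ G p ≤ 1 - q i}
          = ∑ i ∈ T, (m:ℝ) * ((m:ℝ)⁻¹ * (q i * sSup {p : ℝ | 0 ≤ p ∧ G p ≤ 1 - q i})) := by
            apply Finset.sum_congr rfl
            intro i _
            field_simp
        _ ≤ (m:ℝ) * (u * sSup {p : ℝ | 0 ≤ p ∧ G p ≤ 1 - u}) := this
        _ = s * sSup {p : ℝ | 0 ≤ p ∧ G p ≤ 1 - u} := by
            rw [hudef]; field_simp
    -- numeric inequality: s * B ≤ 1 - (1-u)^n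
    have hconv := (convexOn_pow (𝕜 := ℝ) n).2 (Set.mem_Ici.mpr zero_le_one)
      (Set.mem_Ici.mpr hbase0) (by linarith : (0:ℝ) ≤ 1 - s) hs0.le
      (by ring : (1 - s) + s = 1)
    simp only [smul_eq_mul] at hconv
    have hcomb : (1 - s) * 1 + s * (1 - 1 / (n:ℝ)) = 1 - s / (n:ℝ) := by
      field_simp; ring
    rw [hcomb] at hconv
    have hmono_pow : (1 - u) ^ n ≤ (1 - s / (n:ℝ)) ^ n := by
      apply pow_le_pow_left₀ (by linarith : (0:ℝ) ≤ 1 - u)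
      have : s / (n:ℝ) ≤ s / (m:ℝ) := div_le_div_of_nonneg_left hs0.le hmR hmnR
      rw [hudef]; linarith
    have key : s * B ≤ 1 - (1 - u) ^ n := by
      simp only [hBdef]
      have h1n : (1:ℝ) ^ n = 1 := one_pow n
      rw [h1n] at hconv
      nlinarith [hconv, hmono_pow]
    -- price bound
    have hprice := aux_price n G hmono hleft hG0 hGneg hbddinv hbddrev u hu0 hu1
    set P := sSup {p : ℝ | 0 ≤ p ∧ G p ≤ 1 - u} with hPdef
    have hP0 : 0 ≤ P := by
      have ht0 : (0:ℝ) ≤ 1 - u := by linarith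
      exact le_csSup (hbddinv _ ht0 (by linarith)) ⟨le_rfl, by rw [hGneg 0 le_rfl]; exact ht0⟩
    have hfinal : s * P ≤ (1 / B) * Ra := by
      rw [one_div, ← div_eq_inv_mul, le_div_iff₀ hB]
      calc s * P * B = P * (s * B) := by ring
        _ ≤ P * (1 - (1 - u) ^ n) := mul_le_mul_of_nonneg_left key hP0
        _ ≤ Ra := hprice
    calc ∑ i ∈ T, q i * sSup {p : ℝ | 0 ≤ p ∧ G p ≤ 1 - q i} ≤ s * P := hjen'
      _ ≤ (1 / B) * Ra := hfinal
end

section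
/- For every integer n ≥ 1 and every real δ > 0, there exist a regular value distribution represented by G as in the context (i.e., the revenue curve q ↦ q·invG(1−q) is concave on (0,1]) and a vector p⃗ = (p_1,…,p_n) of nonnegative prices such that for every anonymous price p ≥ 0: R^d_n(p⃗) ≥ (1/(1−(1−1/n)^n) − δ)·p(1−G(p)^n). Hence for regular distributions the gap between optimal discriminatory and optimal anonymous revenue can be arbitrarily close to 1/(1−(1−1/n)^n). -/
/-!
The extremal distribution has the linear revenue curve `q ↦ A + B q`. At the anonymous price
where its cdf equals `x`, the revenue is `A (1 + x + ⋯ + xⁿ⁻¹) + B (1 - xⁿ)`, and `A`, `B` are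
chosen so that this polynomial takes the value `1` with a critical point at `x = 1 - 1/n`. Its
derivative has coefficients that change sign once, so `x ↦ x¹⁻ⁿ · derivative` is decreasing and
the critical point is the global maximum: no anonymous price earns more than `1`. Offering the
first `n - 1` bidders a price that sells with a small probability `ε` and the last one the
bottom `A + B` of the support earns about `(n - 1) A + (A + B) = 1 / (1 - (1 - 1/n)ⁿ)`.
-/

open Finset Set Filter Topology

lemma le_of_hasDerivAt_nonneg_of_nonpos {f f' : ℝ → ℝ} {a b : ℝ}
    (hf : ∀ y, HasDerivAt f (f' y) y) (h₁ : ∀ y ∈ Icc a b, 0 ≤ f' y)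
    (h₂ : ∀ y ∈ Ici b, f' y ≤ 0) {x : ℝ} (hx : a ≤ x) : f x ≤ f b := by
  have hcont : Continuous f := continuous_iff_continuousAt.2 fun y => (hf y).continuousAt
  rcases le_total x b with hxb | hbx
  · exact monotoneOn_of_hasDerivWithinAt_nonneg (convex_Icc a b) hcont.continuousOn
      (fun y _ => (hf y).hasDerivWithinAt) (fun y hy => h₁ y (interior_subset hy))
      ⟨hx, hxb⟩ ⟨hx.trans hxb, le_rfl⟩ hxb
  · exact antitoneOn_of_hasDerivWithinAt_nonpos (convex_Ici b) hcont.continuousOn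
      (fun y _ => (hf y).hasDerivWithinAt) (fun y hy => h₂ y (interior_subset hy))
      self_mem_Ici hbx hbx

lemma pow_mul_sum_add_le {c : ℕ → ℝ} (hc : ∀ k, 0 ≤ c k) (d : ℝ) (m : ℕ) {b x : ℝ}
    (hb : 0 ≤ b) (hbx : b ≤ x) :
    b ^ m * (∑ k ∈ range m, c k * x ^ k + d * x ^ m) ≤
      x ^ m * (∑ k ∈ range m, c k * b ^ k + d * b ^ m) := by
  have hterm : ∀ k ∈ range m, b ^ m * (c k * x ^ k) ≤ x ^ m * (c k * b ^ k) := by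
    intro k hk
    obtain ⟨j, rfl⟩ := Nat.exists_eq_add_of_le (Finset.mem_range.1 hk).le
    have hx : 0 ≤ x := hb.trans hbx
    calc b ^ (k + j) * (c k * x ^ k) = c k * (x ^ k * b ^ k) * b ^ j := by ring
      _ ≤ c k * (x ^ k * b ^ k) * x ^ j :=
        mul_le_mul_of_nonneg_left (pow_le_pow_left₀ hb hbx j) (by have := hc k; positivity)
      _ = x ^ (k + j) * (c k * b ^ k) := by ring
  rw [mul_add, mul_add, mul_sum, mul_sum]
  exact add_le_add (sum_le_sum hterm) (by ring_nf; rfl)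

lemma one_sub_mul_sum_succ_mul_pow {R : Type*} [CommRing R] (x : R) (m : ℕ) :
    (1 - x) * ∑ k ∈ range m, (k + 1) * x ^ k = ∑ k ∈ range (m + 1), x ^ k - (m + 1) * x ^ m := by
  induction m with
  | zero => simp
  | succ m ih =>
    rw [sum_range_succ, mul_add, ih, sum_range_succ (n := m + 1)]
    push_cast
    ring

/-- The anonymous revenue `(B + A / (1 - x)) * (1 - xⁿ)` of the price at which `shiftedEqRev A B`
takes the value `x`. -/
def revenueAtCdf (A B : ℝ) (n : ℕ) (x : ℝ) : ℝ := A * ∑ k ∈ range n, x ^ k + B * (1 - x ^ n)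

lemma hasDerivAt_revenueAtCdf (A B : ℝ) (m : ℕ) (x : ℝ) :
    HasDerivAt (revenueAtCdf A B (m + 1))
      (∑ k ∈ range m, A * (k + 1) * x ^ k + -(B * (m + 1)) * x ^ m) x := by
  have hsum : HasDerivAt (fun y => ∑ k ∈ range m, y ^ (k + 1) + 1)
      (∑ k ∈ range m, ((k + 1 : ℕ) : ℝ) * x ^ k) x := by
    refine (HasDerivAt.fun_sum fun k _ => ?_).add_const 1
    simpa using hasDerivAt_pow (k + 1) x
  have hf : revenueAtCdf A B (m + 1) =
      fun y => A * (∑ k ∈ range m, y ^ (k + 1) + 1) + B * (1 - y ^ (m + 1)) := by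
    ext y
    simp only [revenueAtCdf, sum_range_succ', pow_zero]
  rw [hf]
  refine ((hsum.const_mul A).fun_add
    (((hasDerivAt_pow (m + 1) x).const_sub 1).const_mul B)).congr_deriv ?_
  simp only [Nat.add_sub_cancel, Nat.cast_add, Nat.cast_one, mul_sum, mul_assoc]
  ring

lemma revenueAtCdf_le_of_crit {A B b : ℝ} {m : ℕ} (hA : 0 ≤ A) (hb : 0 ≤ b) (hbm : 0 < b ^ m)
    (hcrit : A * ∑ k ∈ range m, (k + 1) * b ^ k = B * (m + 1) * b ^ m) {x : ℝ} (hx : 0 ≤ x) :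
    revenueAtCdf A B (m + 1) x ≤ revenueAtCdf A B (m + 1) b := by
  set f' : ℝ → ℝ := fun y => ∑ k ∈ range m, A * (k + 1) * y ^ k + -(B * (m + 1)) * y ^ m
  have hc : ∀ k : ℕ, 0 ≤ A * (k + 1) := fun k => by positivity
  have hf'b : f' b = 0 := by
    simp only [f', mul_assoc, ← mul_sum, hcrit]
    ring
  refine le_of_hasDerivAt_nonneg_of_nonpos (f' := f') (hasDerivAt_revenueAtCdf A B m)
    (fun y hy => ?_) (fun y hy => ?_) hx
  · have : y ^ m * f' b ≤ b ^ m * f' y := pow_mul_sum_add_le hc _ m hy.1 hy.2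
    rw [hf'b, mul_zero] at this
    exact nonneg_of_mul_nonneg_right this hbm
  · have : b ^ m * f' y ≤ y ^ m * f' b := pow_mul_sum_add_le hc _ m hb hy
    rw [hf'b, mul_zero] at this
    exact nonpos_of_mul_nonpos_right this hbm

/-- The value distribution (as `p ↦ Pr[value < p]`) whose quantile at price `p` is
`min 1 (A / (p - B))`, i.e. whose revenue curve is `q ↦ A + B q`. -/
noncomputable def shiftedEqRev (A B p : ℝ) : ℝ := 1 - A / max (p - B) A

section shiftedEqRev

variable {A B : ℝ}

lemma shiftedEqRev_nonneg (hA : 0 ≤ A) (p : ℝ) : 0 ≤ shiftedEqRev A B p :=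
  sub_nonneg.2 (div_le_one_of_le₀ (le_max_right _ _) (hA.trans (le_max_right _ _)))

lemma shiftedEqRev_le_one (hA : 0 ≤ A) (p : ℝ) : shiftedEqRev A B p ≤ 1 :=
  sub_le_self _ (div_nonneg hA (hA.trans (le_max_right _ _)))

lemma shiftedEqRev_eq_zero (hA : A ≠ 0) {p : ℝ} (hp : p ≤ A + B) : shiftedEqRev A B p = 0 := by
  rw [shiftedEqRev, max_eq_right (by linarith), div_self hA, sub_self]

lemma monotone_shiftedEqRev (hA : 0 < A) : Monotone (shiftedEqRev A B) := fun _ _ hpq =>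
  sub_le_sub_left (div_le_div_of_nonneg_left hA.le (lt_max_of_lt_right hA)
    (max_le_max_right A (sub_le_sub_right hpq B))) 1

lemma continuous_shiftedEqRev (hA : 0 < A) : Continuous (shiftedEqRev A B) :=
  continuous_const.sub <| continuous_const.div (by fun_prop) fun _ => (lt_max_of_lt_right hA).ne'

lemma shiftedEqRev_le_one_sub_iff (hA : 0 < A) {u : ℝ} (hu : 0 < u) (hu1 : u ≤ 1) {p : ℝ} :
    shiftedEqRev A B p ≤ 1 - u ↔ p ≤ B + A / u := by
  have hAu : A ≤ A / u := le_div_self hA.le hu hu1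
  rw [shiftedEqRev, sub_le_sub_iff_left, le_div_iff₀ (lt_max_of_lt_right hA), mul_comm,
    ← le_div_iff₀ hu, max_le_iff]
  constructor
  · rintro ⟨h, -⟩; linarith
  · intro h; exact ⟨by linarith, hAu⟩

lemma setOf_shiftedEqRev_le_one_sub (hA : 0 < A) {u : ℝ} (hu : 0 < u) (hu1 : u ≤ 1) :
    {p : ℝ | 0 ≤ p ∧ shiftedEqRev A B p ≤ 1 - u} = Icc 0 (B + A / u) := by
  ext p
  exact and_congr_right fun _ => shiftedEqRev_le_one_sub_iff hA hu hu1

lemma concaveOn_revenueCurve_shiftedEqRev (hA : 0 < A) (hB : 0 ≤ B) :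
    ConcaveOn ℝ (Ioc 0 1) fun u => u * sSup {p : ℝ | 0 ≤ p ∧ shiftedEqRev A B p ≤ 1 - u} := by
  refine (((concaveOn_id (convex_Ioc 0 1)).smul hB).add_const A).congr fun u ⟨hu, hu1⟩ => ?_
  rw [setOf_shiftedEqRev_le_one_sub hA hu hu1, csSup_Icc (by positivity)]
  show B * u + A = u * (B + A / u)
  rw [mul_add, mul_div_cancel₀ _ hu.ne']
  ring

lemma shiftedEqRev_add_div (hA : 0 < A) {ε : ℝ} (hε : 0 < ε) (hε1 : ε ≤ 1) :
    shiftedEqRev A B (B + A / ε) = 1 - ε := by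
  rw [shiftedEqRev, add_sub_cancel_left, max_eq_left (le_div_self hA.le hε hε1),
    div_div_cancel₀ hA.ne']

lemma mul_one_sub_shiftedEqRev_pow_le (hA : 0 < A) (p : ℝ) (n : ℕ) :
    p * (1 - shiftedEqRev A B p ^ n) ≤ revenueAtCdf A B n (shiftedEqRev A B p) := by
  set x := shiftedEqRev A B p
  have hmax : max (p - B) A * (1 - x) = A := by
    simp only [x, shiftedEqRev, sub_sub_cancel]
    exact mul_div_cancel₀ A (lt_max_of_lt_right hA).ne'
  have hxn : 0 ≤ 1 - x ^ n :=
    sub_nonneg.2 (pow_le_one₀ (shiftedEqRev_nonneg hA.le p) (shiftedEqRev_le_one hA.le p))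
  calc p * (1 - x ^ n) ≤ (B + max (p - B) A) * (1 - x ^ n) := by
        gcongr; linarith [le_max_left (p - B) A]
    _ = revenueAtCdf A B n x := by
        have hgeom : 1 - x ^ n = (1 - x) * ∑ k ∈ range n, x ^ k := by
          linear_combination geom_sum_mul x n
        rw [revenueAtCdf]
        linear_combination (∑ k ∈ range n, x ^ k) * hmax + max (p - B) A * hgeom

end shiftedEqRev

def IsRegularValueDist (G : ℝ → ℝ) : Prop :=
  Monotone G ∧
  (∀ x : ℝ, Tendsto G (𝓝[<] x) (𝓝 (G x))) ∧
  (∀ p : ℝ, 0 ≤ G p) ∧ (∀ p : ℝ, G p ≤ 1) ∧ (∀ p : ℝ, p ≤ 0 → G p = 0) ∧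
  (∀ t : ℝ, 0 ≤ t → t < 1 → BddAbove {p : ℝ | 0 ≤ p ∧ G p ≤ t}) ∧
  ConcaveOn ℝ (Ioc 0 1) (fun u : ℝ => u * sSup {p : ℝ | 0 ≤ p ∧ G p ≤ 1 - u})

lemma isRegularValueDist_shiftedEqRev {A B : ℝ} (hA : 0 < A) (hB : 0 ≤ B) :
    IsRegularValueDist (shiftedEqRev A B) := by
  refine ⟨monotone_shiftedEqRev hA,
    fun x => ((continuous_shiftedEqRev hA).tendsto x).mono_left nhdsWithin_le_nhds,
    shiftedEqRev_nonneg hA.le, shiftedEqRev_le_one hA.le,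
    fun p hp => shiftedEqRev_eq_zero hA.ne' (by linarith), fun t _ ht => ?_,
    concaveOn_revenueCurve_shiftedEqRev hA hB⟩
  have := setOf_shiftedEqRev_le_one_sub (B := B) hA (sub_pos.2 ht) (by linarith)
  rw [sub_sub_cancel] at this
  exact this ▸ bddAbove_Icc

lemma sum_sequential_revenue_eq {G : ℝ → ℝ} {m : ℕ} {pv : Fin (m + 1) → ℝ} {P Q : ℝ}
    (hP : ∀ i : Fin m, pv i.castSucc = P) (hQ : pv (Fin.last m) = Q) :
    ∑ i, pv i * (1 - G (pv i)) * ∏ j ∈ Iio i, G (pv j) =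
      P * (1 - G P) * ∑ i ∈ range m, G P ^ i + Q * (1 - G Q) * G P ^ m := by
  have hprod : ∀ i : Fin (m + 1), ∏ j ∈ Iio i, G (pv j) = G P ^ (i : ℕ) := by
    intro i
    rw [prod_congr rfl fun j hj => ?_, prod_const, Fin.card_Iio]
    obtain ⟨j, rfl⟩ := Fin.exists_castSucc_eq.2 ((mem_Iio.1 hj).trans_le (Fin.le_last i)).ne
    rw [hP]
  rw [Fin.sum_univ_castSucc, ← Fin.sum_univ_eq_sum_range, mul_sum]
  simp only [hP, hQ, hprod, Fin.val_castSucc, Fin.val_last, mul_assoc]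

lemma pow_mul_le_sum_sequential_revenue_shiftedEqRev {A B ε : ℝ} (hA : 0 < A) (hB : 0 ≤ B)
    (hε : 0 < ε) (hε1 : ε ≤ 1) {m : ℕ} {pv : Fin (m + 1) → ℝ}
    (hP : ∀ i : Fin m, pv i.castSucc = B + A / ε) (hQ : pv (Fin.last m) = A + B) :
    (1 - ε) ^ m * ((m + 1) * A + B) ≤
      ∑ i, pv i * (1 - shiftedEqRev A B (pv i)) * ∏ j ∈ Iio i, shiftedEqRev A B (pv j) := by
  rw [sum_sequential_revenue_eq hP hQ, shiftedEqRev_add_div hA hε hε1,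
    shiftedEqRev_eq_zero hA.ne' le_rfl, sub_sub_cancel, sub_zero, mul_one]
  set r := 1 - ε
  have hr0 : 0 ≤ r := sub_nonneg.2 hε1
  have hr1 : r ≤ 1 := by linarith
  have hsum : (m : ℝ) * r ^ m ≤ ∑ i ∈ range m, r ^ i := by
    simpa using card_nsmul_le_sum (range m) (r ^ ·) (r ^ m)
      fun i hi => pow_le_pow_of_le_one hr0 hr1 (mem_range.1 hi).le
  have hPε : A ≤ (B + A / ε) * ε := by
    rw [add_mul, div_mul_cancel₀ _ hε.ne']
    linarith [mul_nonneg hB hε.le]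
  calc r ^ m * ((m + 1) * A + B) = A * (m * r ^ m) + (A + B) * r ^ m := by ring
    _ ≤ (B + A / ε) * ε * ∑ i ∈ range m, r ^ i + (A + B) * r ^ m := by
      gcongr ?_ + _
      exact mul_le_mul hPε hsum (by positivity) (hA.le.trans hPε)

namespace Extremal

/-- For `n` bidders, `b n` is the cdf value at the optimal anonymous price and `D n` the
probability that this price sells. -/
noncomputable def b (n : ℕ) : ℝ := 1 - 1 / n

noncomputable def D (n : ℕ) : ℝ := 1 - b n ^ n

/-- `A n` and `B n` are determined by `revenueAtCdf (A n) (B n) n` having the value `1` and a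
critical point at `b n`; then `n * A n + B n = 1 / D n`. -/
noncomputable def A (n : ℕ) : ℝ := b n ^ (n - 1) / (n * D n ^ 2)

noncomputable def B (n : ℕ) : ℝ := (D n - b n ^ (n - 1)) / D n ^ 2

variable (m : ℕ)

lemma one_sub_b_mul : (1 - b (m + 1)) * (m + 1) = 1 := by
  rw [b, sub_sub_cancel, Nat.cast_succ, one_div_mul_cancel (by positivity)]

lemma b_succ : b (m + 1) = m / (m + 1) := by
  rw [b, Nat.cast_succ]
  field_simp
  ring

lemma b_nonneg : 0 ≤ b (m + 1) := by
  rw [b_succ]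
  positivity

lemma b_lt_one : b (m + 1) < 1 := by
  rw [b]
  have : (0 : ℝ) < 1 / (m + 1 : ℕ) := by positivity
  linarith

lemma pow_b_pos : 0 < b (m + 1) ^ m := by
  rcases m.eq_zero_or_pos with rfl | hm
  · simp
  · rw [b_succ]
    exact pow_pos (div_pos (by exact_mod_cast hm) (by positivity)) m

lemma D_pos : 0 < D (m + 1) :=
  sub_pos.2 (pow_lt_one₀ (b_nonneg m) (b_lt_one m) m.succ_ne_zero)

lemma geom_sum_b : ∑ k ∈ range (m + 1), b (m + 1) ^ k = (m + 1) * D (m + 1) := by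
  rw [D]
  linear_combination (-∑ k ∈ range (m + 1), b (m + 1) ^ k) * one_sub_b_mul m
    - ((m : ℝ) + 1) * geom_sum_mul (b (m + 1)) (m + 1)

lemma sum_succ_mul_b_pow :
    ∑ k ∈ range m, (k + 1) * b (m + 1) ^ k = (m + 1) ^ 2 * (D (m + 1) - b (m + 1) ^ m) := by
  linear_combination (-∑ k ∈ range m, (k + 1) * b (m + 1) ^ k) * one_sub_b_mul m
    + ((m : ℝ) + 1) * one_sub_mul_sum_succ_mul_pow (b (m + 1)) m + ((m : ℝ) + 1) * geom_sum_b m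

lemma A_pos : 0 < A (m + 1) := by
  have := D_pos m
  rw [A, Nat.add_sub_cancel]
  exact div_pos (pow_b_pos m) (by positivity)

lemma B_nonneg : 0 ≤ B (m + 1) := by
  have hsum : 0 ≤ ∑ k ∈ range m, ((k : ℝ) + 1) * b (m + 1) ^ k :=
    sum_nonneg fun k _ => by have := b_nonneg m; positivity
  rw [sum_succ_mul_b_pow] at hsum
  rw [B, Nat.add_sub_cancel]
  exact div_nonneg (nonneg_of_mul_nonneg_right hsum (by positivity)) (sq_nonneg _)

lemma revenueAtCdf_b : revenueAtCdf (A (m + 1)) (B (m + 1)) (m + 1) (b (m + 1)) = 1 := by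
  have := D_pos m
  rw [revenueAtCdf, geom_sum_b, ← D, A, B, Nat.add_sub_cancel]
  push_cast
  field_simp
  ring

lemma revenueAtCdf_crit :
    A (m + 1) * ∑ k ∈ range m, (k + 1) * b (m + 1) ^ k = B (m + 1) * (m + 1) * b (m + 1) ^ m := by
  have := D_pos m
  rw [sum_succ_mul_b_pow, A, B, Nat.add_sub_cancel]
  push_cast
  field_simp

lemma revenueAtCdf_le_one {x : ℝ} (hx : 0 ≤ x) :
    revenueAtCdf (A (m + 1)) (B (m + 1)) (m + 1) x ≤ 1 :=
  (revenueAtCdf_le_of_crit (A_pos m).le (b_nonneg m) (pow_b_pos m) (revenueAtCdf_crit m)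
    hx).trans_eq (revenueAtCdf_b m)

lemma succ_mul_A_add_B : (m + 1) * A (m + 1) + B (m + 1) = 1 / D (m + 1) := by
  have := D_pos m
  rw [A, B, Nat.add_sub_cancel]
  push_cast
  field_simp
  ring

end Extremal

lemma exists_lt_one_sub_pow (m : ℕ) {c : ℝ} (hc : c < 1) : ∃ ε ∈ Ioc (0 : ℝ) 1, c < (1 - ε) ^ m := by
  have hcont : Continuous fun ε : ℝ => (1 - ε) ^ m := by fun_prop
  have hlim : Tendsto (fun ε : ℝ => (1 - ε) ^ m) (𝓝[>] 0) (𝓝 1) := by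
    simpa using (hcont.tendsto 0).mono_left nhdsWithin_le_nhds
  obtain ⟨ε, hεc, hε⟩ := ((hlim.eventually (lt_mem_nhds hc)).and (Ioc_mem_nhdsGT one_pos)).exists
  exact ⟨ε, hε, hεc⟩

lemma mul_le_of_nonneg_of_le_one_of_le {c x y : ℝ} (hx₀ : 0 ≤ x) (hx₁ : x ≤ 1) (hc : c ≤ y) (hy : 0 ≤ y) :
    c * x ≤ y := by
  nlinarith [mul_nonneg (sub_nonneg.2 hx₁) hy, mul_nonneg hx₀ (sub_nonneg.2 hc)]

theorem stmt_13_general (n : ℕ) (δ : ℝ) (hδ : 0 < δ) :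
    ∃ G : ℝ → ℝ, ∃ pv : Fin n → ℝ,
      Monotone G ∧
      (∀ x : ℝ, Filter.Tendsto G (nhdsWithin x (Set.Iio x)) (nhds (G x))) ∧
      (∀ p : ℝ, 0 ≤ G p) ∧ (∀ p : ℝ, G p ≤ 1) ∧ (∀ p : ℝ, p ≤ 0 → G p = 0) ∧
      (∀ t : ℝ, 0 ≤ t → t < 1 → BddAbove {p : ℝ | 0 ≤ p ∧ G p ≤ t}) ∧
      ConcaveOn ℝ (Set.Ioc (0 : ℝ) 1)
        (fun u : ℝ => u * sSup {p : ℝ | 0 ≤ p ∧ G p ≤ 1 - u}) ∧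
      (∀ i, 0 ≤ pv i) ∧
      (∀ p : ℝ, 0 ≤ p →
        (1 / (1 - (1 - 1 / (n : ℝ)) ^ n) - δ) * (p * (1 - (G p) ^ n)) ≤
          ∑ i, pv i * (1 - G (pv i)) * ∏ j ∈ Finset.Iio i, G (pv j)) := by
  rcases n with _ | m
  · obtain ⟨h₁, h₂, h₃, h₄, h₅, h₆, h₇⟩ := isRegularValueDist_shiftedEqRev (B := 0) one_pos le_rfl
    exact ⟨_, Fin.elim0, h₁, h₂, h₃, h₄, h₅, h₆, h₇, fun i => i.elim0, fun p _ => by simp⟩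
  set A := Extremal.A (m + 1)
  set B := Extremal.B (m + 1)
  set D := Extremal.D (m + 1)
  have hA : 0 < A := Extremal.A_pos m
  have hB : 0 ≤ B := Extremal.B_nonneg m
  have hD : 0 < D := Extremal.D_pos m
  obtain ⟨ε, ⟨hε, hε1⟩, hεδ⟩ := exists_lt_one_sub_pow m (sub_lt_self 1 (mul_pos hδ hD))
  obtain ⟨h₁, h₂, h₃, h₄, h₅, h₆, h₇⟩ := isRegularValueDist_shiftedEqRev hA hB
  set pv : Fin (m + 1) → ℝ := fun i => if i = Fin.last m then A + B else B + A / ε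
  refine ⟨shiftedEqRev A B, pv, h₁, h₂, h₃, h₄, h₅, h₆, h₇,
    fun i => by dsimp only [pv]; split_ifs <;> positivity, fun p hp => ?_⟩
  have hanon : p * (1 - shiftedEqRev A B p ^ (m + 1)) ≤ 1 :=
    (mul_one_sub_shiftedEqRev_pow_le hA p _).trans (Extremal.revenueAtCdf_le_one m (h₃ p))
  have hanon₀ : 0 ≤ p * (1 - shiftedEqRev A B p ^ (m + 1)) :=
    mul_nonneg hp (sub_nonneg.2 (pow_le_one₀ (h₃ p) (h₄ p)))
  have hdiscr := pow_mul_le_sum_sequential_revenue_shiftedEqRev hA hB hε hε1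
    (pv := pv) (fun i => if_neg (Fin.castSucc_lt_last i).ne) (if_pos rfl)
  rw [Extremal.succ_mul_A_add_B] at hdiscr
  have hratio : 1 / D - δ ≤ (1 - ε) ^ m * (1 / D) := by
    rw [← div_eq_mul_one_div, le_div_iff₀ hD, sub_mul, one_div_mul_cancel hD.ne']
    linarith
  have hpow : 0 ≤ (1 - ε) ^ m * (1 / D) := by
    have : 0 ≤ 1 - ε := sub_nonneg.2 hε1
    positivity
  exact mul_le_of_nonneg_of_le_one_of_le hanon₀ hanon (hratio.trans hdiscr) (hpow.trans hdiscr)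

/-- Theorem 6 (lower bound for regular distributions): for every `n ≥ 1` and `δ > 0`
there is a regular value distribution `G` and discriminatory prices whose revenue is at
least `(1/(1 - (1 - 1/n)^n) - δ)` times the revenue of every anonymous price. -/
theorem stmt_13 (n : ℕ) (hn : 1 ≤ n) (δ : ℝ) (hδ : 0 < δ) :
    ∃ G : ℝ → ℝ, ∃ pv : Fin n → ℝ,
      Monotone G ∧
      (∀ x : ℝ, Filter.Tendsto G (nhdsWithin x (Set.Iio x)) (nhds (G x))) ∧
      (∀ p : ℝ, 0 ≤ G p) ∧ (∀ p : ℝ, G p ≤ 1) ∧ (∀ p : ℝ, p ≤ 0 → G p = 0) ∧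
      (∀ t : ℝ, 0 ≤ t → t < 1 → BddAbove {p : ℝ | 0 ≤ p ∧ G p ≤ t}) ∧
      ConcaveOn ℝ (Set.Ioc (0 : ℝ) 1)
        (fun u : ℝ => u * sSup {p : ℝ | 0 ≤ p ∧ G p ≤ 1 - u}) ∧
      (∀ i, 0 ≤ pv i) ∧
      (∀ p : ℝ, 0 ≤ p →
        (1 / (1 - (1 - 1 / (n : ℝ)) ^ n) - δ) * (p * (1 - (G p) ^ n)) ≤
          ∑ i, pv i * (1 - G (pv i)) * ∏ j ∈ Finset.Iio i, G (pv j)) :=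
  stmt_13_general n δ hδ
end

section
/- Let f : ℝ → ℝ be a nonnegative integrable function with f(x) = 0 for x < 0 and ∫_{−∞}^{∞} f(x) dx = 1, let F(x) = ∫_{−∞}^{x} f(t) dt, and assume ∫_{0}^{∞} x·f(x) dx < ∞. Then for every y ≥ 0: ∫_{y}^{∞} ( x·f(x) − (1−F(x)) ) dx = y·(1−F(y)). (In terms of the virtual value φ(x) = x − (1−F(x))/f(x), this says E[φ(X) · 1{X ≥ y}] = y·Pr[X ≥ y], i.e., E[φ(X) | X ≥ y] = y.) -/
/-!
Writing `1 - F(x) = ∫_{(x,∞)} f`, Tonelli's theorem turns `∫_{[y,∞)} (1 - F)` into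
`∫_{[y,∞)} (t - y) f(t) dt`, since a point `t` lies in `(x, ∞)` for a set of `x ∈ [y, ∞)` of
length `t - y`. Subtracting this from `∫_{[y,∞)} x f(x) dx` leaves `y ∫_{[y,∞)} f = y (1 - F(y))`.
-/

open MeasureTheory Set
open scoped ENNReal

theorem lintegral_Ici_lintegral_Ioi {g : ℝ → ℝ≥0∞} (hg : AEMeasurable g) (y : ℝ) :
    ∫⁻ x in Ici y, ∫⁻ t in Ioi x, g t = ∫⁻ t in Ici y, ENNReal.ofReal (t - y) * g t := by
  have hmeas : AEMeasurable (fun p : ℝ × ℝ => (Ioi p.1).indicator g p.2)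
      ((volume.restrict (Ici y)).prod volume) := by
    have hind : (fun p : ℝ × ℝ => (Ioi p.1).indicator g p.2)
        = {q : ℝ × ℝ | q.1 < q.2}.indicator (fun q => g q.2) := by
      ext p; simp [indicator]
    rw [hind]
    exact (hg.comp_quasiMeasurePreserving Measure.quasiMeasurePreserving_snd).indicator
      (measurableSet_lt measurable_fst measurable_snd)
  have hsection (t : ℝ) : ∫⁻ x in Ici y, (Ioi x).indicator g t = ENNReal.ofReal (t - y) * g t := by
    have hind : (fun x => (Ioi x).indicator g t) = (Iio t).indicator fun _ => g t := by
      ext x; simp [indicator]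
    rw [hind, lintegral_indicator_const measurableSet_Iio, Measure.restrict_apply measurableSet_Iio,
      Iio_inter_Ici, Real.volume_Ico, mul_comm]
  have hsupport : (fun t => ENNReal.ofReal (t - y) * g t).support ⊆ Ici y := fun t ht => by
    by_contra hty
    exact ht (by simp [ENNReal.ofReal_eq_zero.2 (sub_nonpos.2 (not_le.1 hty).le)])
  calc ∫⁻ x in Ici y, ∫⁻ t in Ioi x, g t
      = ∫⁻ x in Ici y, ∫⁻ t, (Ioi x).indicator g t := by
        simp_rw [lintegral_indicator measurableSet_Ioi]
    _ = ∫⁻ t, ∫⁻ x in Ici y, (Ioi x).indicator g t := lintegral_lintegral_swap hmeas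
    _ = ∫⁻ t in Ici y, ENNReal.ofReal (t - y) * g t := by
        simp_rw [hsection, setLIntegral_eq_of_support_subset hsupport]

section Tail

variable {f : ℝ → ℝ}

theorem antitone_integral_Ioi (hf0 : ∀ x, 0 ≤ f x) (hfi : Integrable f) :
    Antitone fun x => ∫ t in Ioi x, f t := fun _ _ hab =>
  setIntegral_mono_set hfi.integrableOn (ae_of_all _ hf0) (Ioi_subset_Ioi hab).eventuallyLE

theorem sub_mul_nonneg_ae_restrict_Ici (hf0 : ∀ x, 0 ≤ f x) (y : ℝ) :
    0 ≤ᵐ[volume.restrict (Ici y)] fun t => (t - y) * f t :=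
  ae_restrict_of_forall_mem measurableSet_Ici fun t ht => mul_nonneg (sub_nonneg.2 ht) (hf0 t)

theorem lintegral_Ici_ofReal_integral_Ioi (hf0 : ∀ x, 0 ≤ f x) (hfi : Integrable f) (y : ℝ) :
    ∫⁻ x in Ici y, ENNReal.ofReal (∫ t in Ioi x, f t)
      = ∫⁻ t in Ici y, ENNReal.ofReal ((t - y) * f t) := by
  simp_rw [ENNReal.ofReal_mul' (hf0 _), ← lintegral_Ici_lintegral_Ioi hfi.aemeasurable.ennreal_ofReal]
  refine lintegral_congr fun x => ?_
  exact ofReal_integral_eq_lintegral_ofReal hfi.integrableOn (ae_of_all _ hf0)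

theorem integrableOn_Ici_integral_Ioi (hf0 : ∀ x, 0 ≤ f x) (hfi : Integrable f) {y : ℝ}
    (hmom : IntegrableOn (fun t => (t - y) * f t) (Ici y)) :
    IntegrableOn (fun x => ∫ t in Ioi x, f t) (Ici y) := by
  refine ⟨(antitone_integral_Ioi hf0 hfi).measurable.aestronglyMeasurable, ?_⟩
  rw [hasFiniteIntegral_iff_ofReal (ae_of_all _ fun x => integral_nonneg fun t => hf0 t),
    lintegral_Ici_ofReal_integral_Ioi hf0 hfi]
  exact (hasFiniteIntegral_iff_ofReal (sub_mul_nonneg_ae_restrict_Ici hf0 y)).1 hmom.2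

theorem integral_Ici_integral_Ioi (hf0 : ∀ x, 0 ≤ f x) (hfi : Integrable f) (y : ℝ) :
    ∫ x in Ici y, ∫ t in Ioi x, f t = ∫ t in Ici y, (t - y) * f t := by
  rw [integral_eq_lintegral_of_nonneg_ae (ae_of_all _ fun x => integral_nonneg fun t => hf0 t)
      (antitone_integral_Ioi hf0 hfi).measurable.aestronglyMeasurable,
    integral_eq_lintegral_of_nonneg_ae (sub_mul_nonneg_ae_restrict_Ici hf0 y)
      ((continuous_id.sub continuous_const).aestronglyMeasurable.mul
        hfi.aestronglyMeasurable.restrict),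
    lintegral_Ici_ofReal_integral_Ioi hf0 hfi]

end Tail

theorem stmt_14_general (f : ℝ → ℝ) (hf0 : ∀ x, 0 ≤ f x)
    (hfi : Integrable f)
    (hprob : ∫ x, f x = 1)
    (hmean : Integrable fun x => x * f x)
    (y : ℝ) :
    ∫ x in Set.Ici y, (x * f x - (1 - ∫ t in Set.Iic x, f t)) =
      y * (1 - ∫ t in Set.Iic y, f t) := by
  have htail (x : ℝ) : 1 - ∫ t in Iic x, f t = ∫ t in Ioi x, f t := by
    rw [← hprob, ← intervalIntegral.integral_Iic_add_Ioi hfi.integrableOn hfi.integrableOn]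
    ring
  have hmom : Integrable fun t => (t - y) * f t := by
    simpa only [sub_mul, Pi.sub_def] using hmean.sub (hfi.const_mul y)
  simp only [htail]
  rw [integral_sub hmean.integrableOn (integrableOn_Ici_integral_Ioi hf0 hfi hmom.integrableOn),
    integral_Ici_integral_Ioi hf0 hfi, ← integral_sub hmean.integrableOn hmom.integrableOn,
    ← integral_Ici_eq_integral_Ioi, ← integral_const_mul]
  congr 1 with t
  ring

/-- Equation (6): the basic property of virtual values.  For a nonnegative random
variable with density `f`, cdf `F` and finite mean, for every `y ≥ 0`,
`∫_{y}^{∞} (x f(x) - (1 - F(x))) dx = y (1 - F(y))`, i.e. `E[φ(X) | X ≥ y] = y`. -/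
theorem stmt_14 (f : ℝ → ℝ) (hf0 : ∀ x, 0 ≤ f x)
    (hfi : Integrable f)
    (hfneg : ∀ x : ℝ, x < 0 → f x = 0)
    (hprob : ∫ x, f x = 1)
    (hmean : Integrable fun x => x * f x)
    (y : ℝ) (hy : 0 ≤ y) :
    ∫ x in Set.Ici y, (x * f x - (1 - ∫ t in Set.Iic x, f t)) =
      y * (1 - ∫ t in Set.Iic y, f t) :=
  stmt_14_general f hf0 hfi hprob hmean y
end

section
/- Let G : ℝ → ℝ satisfy 0 ≤ G(p) ≤ 1 for all p, and suppose the set {p·(1−G(p)) : p ≥ 0} is bounded above. Define V_0 = 0 and V_{k+1} = sup_{p ≥ 0} ( p·(1−G(p)) + G(p)·V_k ) for k ≥ 0. Then for every integer n ≥ 1, the optimal discriminatory revenue satisfies sup{ R^d_n(p⃗) : p⃗ ∈ ℝ_{≥0}^n } = V_n; that is, the optimal discriminatory prices are characterized by backward induction, the price offered to a bidder depending only on the number of bidders remaining after it. -/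
/-!
Fixing the first price `p` splits the revenue of `n + 1` bidders as
`p (1 - G p) + G p * r`, where `r` is the revenue of the remaining `n` prices. As `G p ≥ 0`,
the supremum over those remaining prices passes through this affine map, giving
`p (1 - G p) + G p * V n`, and the supremum over `p` is then `V (n + 1)`.
-/

open Finset

theorem Fin.prod_Iio_succ {M : Type*} [CommMonoid M] {n : ℕ} (f : Fin (n + 1) → M) (i : Fin n) :
    ∏ j ∈ Iio i.succ, f j = f 0 * ∏ j ∈ Iio i, f j.succ := by
  have h : Iio i.succ = insert 0 (Ioo 0 i.succ) := by
    ext j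
    simp [Fin.pos_iff_ne_zero]
  rw [h, prod_insert (by simp), ← Fin.map_succEmb_Iio, prod_map]
  rfl

theorem IsLUB.const_add_mul {α : Type*} [Field α] [LinearOrder α] [IsStrictOrderedRing α]
    {s : Set α} {b c : α} (hc : 0 ≤ c) (hs : IsLUB s b) (a : α) :
    IsLUB ((fun t => a + c * t) '' s) (a + c * b) := by
  simpa [Set.image_image] using (OrderIso.addLeft a).isLUB_image'.2 (hs.mul_left hc)

def discrRevenue {R : Type*} [CommRing R] (G : R → R) {n : ℕ} (pv : Fin n → R) : R :=
  ∑ i, pv i * (1 - G (pv i)) * ∏ j ∈ Iio i, G (pv j)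

theorem discrRevenue_cons {R : Type*} [CommRing R] (G : R → R) {n : ℕ} (p : R) (pv : Fin n → R) :
    discrRevenue G (Fin.cons p pv : Fin (n + 1) → R)
      = p * (1 - G p) + G p * discrRevenue G pv := by
  have h0 : Iio (0 : Fin (n + 1)) = ∅ := by
    ext j
    simp
  simp only [discrRevenue, Fin.sum_univ_succ, Fin.prod_Iio_succ, Fin.cons_zero, Fin.cons_succ, h0,
    prod_empty, mul_one, mul_sum]
  congr 1
  exact sum_congr rfl fun i _ => by ring

def discrRevenues (G : ℝ → ℝ) (n : ℕ) : Set ℝ :=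
  {r | ∃ pv : Fin n → ℝ, (∀ i, 0 ≤ pv i) ∧ r = discrRevenue G pv}

theorem zero_mem_discrRevenues (G : ℝ → ℝ) (n : ℕ) : (0 : ℝ) ∈ discrRevenues G n :=
  ⟨0, fun _ => le_rfl, by simp [discrRevenue]⟩

theorem discrRevenues_zero (G : ℝ → ℝ) : discrRevenues G 0 = {0} := by
  ext r
  simp [discrRevenues, discrRevenue]

theorem discrRevenues_succ (G : ℝ → ℝ) (n : ℕ) :
    discrRevenues G (n + 1)
      = ⋃ p : Set.Ici (0 : ℝ), (fun t => p * (1 - G p) + G p * t) '' discrRevenues G n := by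
  ext r
  simp only [discrRevenues, Set.mem_iUnion, Set.mem_image, Set.mem_ofPred_eq, Subtype.exists,
    Set.mem_Ici, exists_prop]
  constructor
  · rintro ⟨pv, hpv, rfl⟩
    refine ⟨pv 0, hpv 0, _, ⟨Fin.tail pv, fun i => hpv i.succ, rfl⟩, ?_⟩
    rw [← discrRevenue_cons, Fin.cons_self_tail]
  · rintro ⟨p, hp, _, ⟨pv, hpv, rfl⟩, rfl⟩
    exact ⟨Fin.cons p pv, Fin.cases hp hpv, (discrRevenue_cons G p pv).symm⟩

theorem isLUB_discrRevenues (G : ℝ → ℝ) (hG0 : ∀ p, 0 ≤ G p) (hG1 : ∀ p, G p ≤ 1)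
    (hbdd : BddAbove {r : ℝ | ∃ p : ℝ, 0 ≤ p ∧ r = p * (1 - G p)})
    (V : ℕ → ℝ) (hV0 : V 0 = 0)
    (hVrec : ∀ k : ℕ,
      V (k + 1) = sSup {r : ℝ | ∃ p : ℝ, 0 ≤ p ∧ r = p * (1 - G p) + G p * V k}) (n : ℕ) :
    IsLUB (discrRevenues G n) (V n) := by
  induction n with
  | zero => simp [discrRevenues_zero, hV0, isLUB_singleton]
  | succ n ih =>
    obtain ⟨M, hM⟩ := hbdd
    have hVn : 0 ≤ V n := ih.1 (zero_mem_discrRevenues G n)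
    set f : ℝ → ℝ := fun p => p * (1 - G p) + G p * V n
    have hrange : {r : ℝ | ∃ p : ℝ, 0 ≤ p ∧ r = f p}
        = Set.range fun p : Set.Ici (0 : ℝ) => f p := by
      rw [← Set.image_eq_range]
      ext r
      simp [eq_comm]
    have hf : IsLUB (Set.range fun p : Set.Ici (0 : ℝ) => f p) (V (n + 1)) := by
      rw [hVrec n, hrange]
      refine isLUB_csSup ⟨f 0, ⟨0, Set.self_mem_Ici⟩, rfl⟩ ⟨M + V n, ?_⟩
      rintro _ ⟨⟨p, hp⟩, rfl⟩
      exact add_le_add (hM ⟨p, hp, rfl⟩) (mul_le_of_le_one_left hVn (hG1 p))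
    have hfiber (p : Set.Ici (0 : ℝ)) :
        IsLUB ((fun t => p * (1 - G p) + G p * t) '' discrRevenues G n) (f p) :=
      ih.const_add_mul (hG0 p) _
    rw [discrRevenues_succ]
    exact (isLUB_iUnion_iff_of_isLUB hfiber _).1 hf

/-- Backward-induction characterization of the optimal discriminatory revenue:
with `V 0 = 0` and `V (k+1) = sup_{p ≥ 0} (p (1 - G p) + G p * V k)`, the optimal
discriminatory revenue with `n` bidders equals `V n`. -/
theorem stmt_17 (G : ℝ → ℝ) (hG0 : ∀ p : ℝ, 0 ≤ G p) (hG1 : ∀ p : ℝ, G p ≤ 1)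
    (hbdd : BddAbove {r : ℝ | ∃ p : ℝ, 0 ≤ p ∧ r = p * (1 - G p)})
    (V : ℕ → ℝ) (hV0 : V 0 = 0)
    (hVrec : ∀ k : ℕ,
      V (k + 1) = sSup {r : ℝ | ∃ p : ℝ, 0 ≤ p ∧ r = p * (1 - G p) + G p * V k}) :
    ∀ n : ℕ, 1 ≤ n →
      sSup {r : ℝ | ∃ pv : Fin n → ℝ, (∀ i, 0 ≤ pv i) ∧
          r = ∑ i, pv i * (1 - G (pv i)) * ∏ j ∈ Finset.Iio i, G (pv j)} = V n := by
  intro n _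
  exact (isLUB_discrRevenues G hG0 hG1 hbdd V hV0 hVrec n).csSup_eq
    ⟨0, zero_mem_discrRevenues G n⟩
end

section
/- For every integer n ≥ 2 and every real x ∈ (0,1): (1−x)^n·(n·x − x + 2) + n·x + x − 2 > 0. -/
/-- Positivity used in Lemma 3: for `n ≥ 2` and `x ∈ (0,1)`,
`(1-x)^n (nx - x + 2) + nx + x - 2 > 0`. -/
theorem stmt_18 (n : ℕ) (hn : 2 ≤ n) (x : ℝ) (hx0 : 0 < x) (hx1 : x < 1) :
    0 < (1 - x) ^ n * ((n : ℝ) * x - x + 2) + (n : ℝ) * x + x - 2 := by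
  induction n, hn using Nat.le_induction with
  | base =>
    have h : (1 - x) ^ 2 * (((2:ℕ) : ℝ) * x - x + 2) + ((2:ℕ):ℝ) * x + x - 2 = x ^ 3 := by
      push_cast; ring
    rw [h]; positivity
  | succ n hn ih =>
    have hy0 : (0:ℝ) < 1 - x := by linarith
    have hb : 1 + (n:ℝ) * x ≤ (1 + x) ^ n := one_add_mul_le_pow (by linarith) n
    have key : (1 + (n:ℝ) * x) * (1 - x) ^ n ≤ 1 := by
      calc (1 + (n:ℝ) * x) * (1 - x) ^ n ≤ (1 + x) ^ n * (1 - x) ^ n :=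
            mul_le_mul_of_nonneg_right hb (pow_nonneg hy0.le n)
        _ = (1 - x ^ 2) ^ n := by rw [← mul_pow]; ring_nf
        _ ≤ 1 := pow_le_one₀ (by nlinarith) (by nlinarith)
    have hd : (1 - x) ^ (n + 1) = (1 - x) ^ n * (1 - x) := pow_succ _ _
    push_cast
    push_cast at ih
    nlinarith [ih, key, mul_pos hx0 hy0, pow_nonneg hy0.le n,
      mul_nonneg hx0.le (pow_nonneg hy0.le n)]
end

section
/- For every integer n ≥ 2 and every real q ∈ (0,1): 2 − (n+1)·q − (2 + (n−1)·q)·(1−q)^n < 0. -/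
/-- Inequality used in the proof of Theorem 6: for `n ≥ 2` and `q ∈ (0,1)`,
`2 - (n+1) q - (2 + (n-1) q)(1-q)^n < 0`. -/
theorem stmt_19 (n : ℕ) (hn : 2 ≤ n) (q : ℝ) (hq0 : 0 < q) (hq1 : q < 1) :
    2 - ((n : ℝ) + 1) * q - (2 + ((n : ℝ) - 1) * q) * (1 - q) ^ n < 0 := by
  induction n, hn using Nat.le_induction with
  | base =>
      push_cast
      nlinarith [mul_pos (mul_pos hq0 hq0) hq0]
  | succ n hn ih =>
      have hpow : (0 : ℝ) < (1 - q) ^ n := pow_pos (by linarith) n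
      have hbern : 1 + (n : ℝ) * q ≤ (1 + q) ^ n := by
        have := one_add_mul_le_pow (a := q) (by linarith) n
        linarith
      have hmul : (1 - q) ^ n * (1 + q) ^ n ≤ 1 := by
        rw [← mul_pow]
        have h1 : (0 : ℝ) ≤ (1 - q) * (1 + q) := by nlinarith
        have h2 : (1 - q) * (1 + q) ≤ 1 := by nlinarith
        exact pow_le_one₀ h1 h2
      have key : (1 - q) ^ n * (1 + (n : ℝ) * q) ≤ 1 := by
        calc (1 - q) ^ n * (1 + (n : ℝ) * q)
            ≤ (1 - q) ^ n * (1 + q) ^ n := by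
              exact mul_le_mul_of_nonneg_left hbern (le_of_lt hpow)
          _ ≤ 1 := hmul
      have hstep : 2 - ((n : ℝ) + 1 + 1) * q - (2 + ((n : ℝ) + 1 - 1) * q) * (1 - q) ^ (n + 1)
          = (2 - ((n : ℝ) + 1) * q - (2 + ((n : ℝ) - 1) * q) * (1 - q) ^ n)
            - q + q * ((1 - q) ^ n * (1 + (n : ℝ) * q)) := by
        rw [pow_succ]; ring
      push_cast
      rw [hstep]
      nlinarith [key, ih]
end
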